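/- arXiv:2503.11676 — 11 statements merged into one kernel-verified Lean document; each statement's English description precedes it below -/
import Mathlib

section
/- For coprime integers p,q > 1, the number f_{p,q}(n) of representations of n as a sum of distinct terms of the form p^α q^β (α,β ∈ ℕ) is at most 2^{(log n)²/(2 log p log q) · (1 + O(1/log n))}. -/
open Filter Real

/-- Number of representations of `n` as a sum of distinct terms of the form `p^a * q^b`. -/
noncomputable def fpq (p q n : ℕ) : ℕ :=
  Set.ncard {S : Finset ℕ | (∀ k ∈ S, ∃ a b : ℕ, k = p ^ a * q ^ b) ∧ S.sum id = n}

/-!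
A set summing to `n` consists of terms `p^a q^b ≤ n`, so `f_{p,q}(n) ≤ 2^M` where `M` is the
number of pairs `(a, b)` with `a log p + b log q ≤ log n`. These are the lattice points of a
right triangle with legs `log n / log p` and `log n / log q`; counting them column by column gives
`M ≤ (log n)² / (2 log p log q) + O(log n)`.
-/

open Finset

lemma ncard_finsets_sum_eq_le_two_pow_card {P : ℕ → Prop} {n : ℕ} {T : Finset ℕ}
    (hT : ∀ k ≤ n, P k → k ∈ T) :
    {S : Finset ℕ | (∀ k ∈ S, P k) ∧ S.sum id = n}.ncard ≤ 2 ^ #T := by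
  have hsub : {S : Finset ℕ | (∀ k ∈ S, P k) ∧ S.sum id = n} ⊆ ↑T.powerset := by
    rintro S ⟨hP, hsum⟩
    rw [mem_coe, mem_powerset]
    intro k hk
    exact hT k (hsum ▸ single_le_sum (f := id) (fun _ _ => Nat.zero_le _) hk) (hP k hk)
  calc _ ≤ (T.powerset : Set (Finset ℕ)).ncard := Set.ncard_le_ncard hsub (finite_toSet _)
    _ = 2 ^ #T := by rw [Set.ncard_coe_finset, card_powerset]

/-- The exponent pairs `(a, b)` with `p^a q^b ≤ n`, listed column by column. -/
def exponentPairs (p q n : ℕ) : Finset (Σ _ : ℕ, ℕ) :=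
  (range (Nat.log p n + 1)).sigma fun a => range (Nat.log q (n / p ^ a) + 1)

lemma mem_exponentPairs_of_pow_mul_pow_le {p q n a b : ℕ} (hp : 1 < p) (hq : 1 < q)
    (h : p ^ a * q ^ b ≤ n) : ⟨a, b⟩ ∈ exponentPairs p q n := by
  have hpa : p ^ a ≤ n := le_of_mul_le_of_one_le_left h (Nat.one_le_pow _ _ (by omega))
  have hqb : q ^ b ≤ n / p ^ a := (Nat.le_div_iff_mul_le (by positivity)).mpr (by linarith)
  simp only [exponentPairs, mem_sigma, mem_range, Nat.lt_succ_iff]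
  exact ⟨Nat.le_log_of_pow_le hp hpa, Nat.le_log_of_pow_le hq hqb⟩

lemma fpq_le_two_pow_card_exponentPairs {p q : ℕ} (hp : 1 < p) (hq : 1 < q) (n : ℕ) :
    fpq p q n ≤ 2 ^ #(exponentPairs p q n) := by
  classical
  calc fpq p q n ≤ 2 ^ #((exponentPairs p q n).image fun x => p ^ x.1 * q ^ x.2) := by
        refine ncard_finsets_sum_eq_le_two_pow_card ?_
        rintro k hk ⟨a, b, rfl⟩
        exact mem_image_of_mem _ (mem_exponentPairs_of_pow_mul_pow_le hp hq hk)
    _ ≤ 2 ^ #(exponentPairs p q n) := Nat.pow_le_pow_right two_pos card_image_le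

lemma natLog_div_pow_le {p q n a : ℕ} (hp : 0 < p) (hpa : p ^ a ≤ n) :
    (Nat.log q (n / p ^ a) : ℝ) ≤ (log n - a * log p) / log q := by
  have hdiv : (0 : ℝ) < (n / p ^ a : ℕ) := by
    exact_mod_cast Nat.div_pos hpa (by positivity)
  have hlog : log ((n / p ^ a : ℕ) : ℝ) ≤ log n - a * log p := by
    have hp' : (0 : ℝ) < p := by exact_mod_cast hp
    have hn : (0 : ℝ) < n := by exact_mod_cast (pow_pos hp a).trans_le hpa
    rw [← log_pow, ← log_div hn.ne' (by positivity)]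
    exact log_le_log hdiv (by exact_mod_cast Nat.cast_div_le)
  calc (Nat.log q (n / p ^ a) : ℝ) ≤ logb q (n / p ^ a : ℕ) := natLog_le_logb _ _
    _ ≤ (log n - a * log p) / log q :=
        div_le_div_of_nonneg_right hlog (log_natCast_nonneg q)

lemma sum_range_sub_mul (K : ℕ) (x y : ℝ) :
    ∑ a ∈ range (K + 1), (x - a * y) = (K + 1) * x - K * (K + 1) / 2 * y := by
  induction K with
  | zero => simp
  | succ K ih => rw [sum_range_succ, ih]; push_cast; ring

lemma card_exponentPairs_le {p q n : ℕ} (hp : 1 < p) (hq : 1 < q) (hL : 1 ≤ log n) :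
    (#(exponentPairs p q n) : ℝ) ≤
      log n ^ 2 / (2 * log p * log q) + (1 / log p + 1 / log q + 1) * log n := by
  set K := Nat.log p n
  have hLp : 0 < log p := log_pos (by exact_mod_cast hp)
  have hLq : 0 < log q := log_pos (by exact_mod_cast hq)
  have hn0 : n ≠ 0 := by rintro rfl; norm_num at hL
  have hpow_le {a : ℕ} (ha : a ≤ K) : p ^ a ≤ n :=
    (Nat.pow_le_pow_right (by omega) ha).trans (Nat.pow_log_le_self p hn0)
  have hK : K * log p ≤ log n := by
    rw [← log_pow]; exact log_le_log (by positivity) (by exact_mod_cast hpow_le le_rfl)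
  have hcolumns : (#(exponentPairs p q n) : ℝ) ≤
      ∑ a ∈ range (K + 1), (log n + log q - a * log p) / log q := by
    rw [exponentPairs, card_sigma]
    push_cast
    refine sum_le_sum fun a ha => ?_
    have := natLog_div_pow_le (q := q) (by omega) (hpow_le (Nat.lt_succ_iff.mp (mem_range.mp ha)))
    rw [card_range, Nat.cast_add, Nat.cast_one, add_sub_right_comm, add_div, div_self hLq.ne']
    linarith
  rw [← sum_div, sum_range_sub_mul] at hcolumns
  refine hcolumns.trans ?_
  rw [div_le_iff₀ hLq]
  have hK0 : (0 : ℝ) ≤ K := K.cast_nonneg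
  -- with `x = K log p ≤ log n`, the column sum is `x log n - x² / 2 + O(log n) ≤ (log n)² / 2 + O(log n)`
  field_simp
  nlinarith [sq_nonneg (log n - K * log p), mul_le_mul_of_nonneg_right hK hLq.le,
    mul_nonneg (mul_nonneg hK0 hLp.le) hLp.le, mul_le_mul_of_nonneg_left hL (mul_pos hLp hLq).le]

theorem stmt1_general (p q : ℕ) (hp : 1 < p) (hq : 1 < q) :
    ∃ C : ℝ, 0 < C ∧ ∃ N : ℕ, ∀ n : ℕ, N ≤ n →
      (fpq p q n : ℝ) ≤
        (2 : ℝ) ^ ((Real.log n) ^ 2 / (2 * Real.log p * Real.log q) *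
          (1 + C / Real.log n)) := by
  have hLp : 0 < log p := log_pos (by exact_mod_cast hp)
  have hLq : 0 < log q := log_pos (by exact_mod_cast hq)
  refine ⟨2 * (log p + log q + log p * log q), by positivity, 3, fun n hn => ?_⟩
  have hL : 1 ≤ log n := by
    have : (1 : ℝ) ≤ log 3 := by linarith [log_three_gt_d9]
    exact this.trans (log_le_log (by norm_num) (by exact_mod_cast hn))
  have hexponent : (#(exponentPairs p q n) : ℝ) ≤ log n ^ 2 / (2 * log p * log q) *
      (1 + 2 * (log p + log q + log p * log q) / log n) := by
    refine (card_exponentPairs_le hp hq hL).trans_eq ?_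
    field_simp
    ring
  calc (fpq p q n : ℝ) ≤ (2 : ℝ) ^ (#(exponentPairs p q n) : ℝ) := by
        rw [rpow_natCast]; exact_mod_cast fpq_le_two_pow_card_exponentPairs hp hq n
    _ ≤ _ := rpow_le_rpow_of_exponent_le one_le_two hexponent

theorem stmt1 (p q : ℕ) (hp : 1 < p) (hq : 1 < q) (hpq : Nat.Coprime p q) :
    ∃ C : ℝ, 0 < C ∧ ∃ N : ℕ, ∀ n : ℕ, N ≤ n →
      (fpq p q n : ℝ) ≤
        (2 : ℝ) ^ ((Real.log n) ^ 2 / (2 * Real.log p * Real.log q) *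
          (1 + C / Real.log n)) :=
  stmt1_general p q hp hq
end

section
/- For coprime integers q > p > 1, there are infinitely many n with f_{p,q}(n+1) > f_{p,q}(n). -/
/-!
If `f_{p,q}` were non-increasing from some point on, it would be bounded, say by `E`. The `k²`
numbers `p^a q^b` with `a, b < k` are distinct (by coprimality) and at most `(pq)^k`, so their
`2^(k²)` subsets have sums in `[0, M]` with `M = k² (pq)^k`. Hence
`2^(k²) ≤ ∑_{n ≤ M} f_{p,q}(n) ≤ (M + 1) E`, which fails for large `k` as `log M = O(k)`.
-/

open Filter Real

open Finset

theorem bddAbove_range_of_succ_le {α : Type*} [Preorder α] [IsDirectedOrder α] [Nonempty α]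
    {f : ℕ → α} {N : ℕ} (hf : ∀ n ≥ N, f (n + 1) ≤ f n) : BddAbove (Set.range f) := by
  obtain ⟨E, hE⟩ := ((Set.finite_Iic N).image f).bddAbove
  refine ⟨E, ?_⟩
  rintro _ ⟨n, rfl⟩
  rcases le_total n N with hn | hn
  · exact hE ⟨n, hn, rfl⟩
  · exact (antitoneOn_nat_Ici_of_succ_le hf (le_refl N) hn hn).trans
      (hE ⟨N, Set.mem_Iic.2 le_rfl, rfl⟩)

theorem exists_mul_lt_two_pow_sq (c E : ℕ) : ∃ k, (k * k * c ^ k + 1) * E < 2 ^ (k * k) := by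
  refine ⟨c + E + 3, ?_⟩
  generalize hk : c + E + 3 = k
  have hkk : k * k + 1 ≤ 2 ^ (2 * k) := by
    rw [mul_comm, pow_mul', sq]
    exact Nat.mul_self_lt_mul_self Nat.lt_two_pow_self
  have hck : c ^ k + 1 ≤ 2 ^ (c * k + 1) := by
    have : c ^ k ≤ 2 ^ (c * k) := by
      rw [pow_mul]; exact Nat.pow_le_pow_left Nat.lt_two_pow_self.le k
    rw [pow_succ]; have := Nat.one_le_two_pow (n := c * k); omega
  have hexp : 2 * k + (c * k + 1) + E ≤ k * k := by
    have : k * k = (c + E + 3) * k := by rw [hk]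
    nlinarith
  calc (k * k * c ^ k + 1) * E ≤ (k * k + 1) * (c ^ k + 1) * E := by
        gcongr
        have : (k * k + 1) * (c ^ k + 1) = k * k * c ^ k + 1 + (k * k + c ^ k) := by ring
        omega
    _ ≤ 2 ^ (2 * k) * 2 ^ (c * k + 1) * E := by gcongr
    _ < 2 ^ (2 * k) * 2 ^ (c * k + 1) * 2 ^ E := by gcongr; exact Nat.lt_two_pow_self
    _ = 2 ^ (2 * k + (c * k + 1) + E) := by rw [← pow_add, ← pow_add]
    _ ≤ 2 ^ (k * k) := Nat.pow_le_pow_right two_pos hexp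

theorem card_powerset_eq_sum_card_filter_sum_eq (A : Finset ℕ) :
    2 ^ #A = ∑ n ∈ range (A.sum id + 1), #{S ∈ A.powerset | S.sum id = n} := by
  rw [← card_powerset]
  exact card_eq_sum_card_fiberwise fun S hS ↦
    mem_range.2 (Nat.lt_succ_of_le (sum_le_sum_of_subset (mem_powerset.1 hS)))

theorem finite_setOf_sum_eq (n : ℕ) : {S : Finset ℕ | S.sum id = n}.Finite := by
  refine (range (n + 1)).powerset.finite_toSet.subset fun S hS ↦ ?_
  simp only [coe_powerset, Set.mem_preimage, Set.mem_powerset_iff, coe_subset]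
  intro x hx
  exact mem_range.2 (Nat.lt_succ_of_le (hS ▸ single_le_sum_of_canonicallyOrdered (f := id) hx))

theorem card_filter_sum_eq_le_fpq {p q : ℕ} {A : Finset ℕ}
    (hA : ∀ x ∈ A, ∃ a b : ℕ, x = p ^ a * q ^ b) (n : ℕ) :
    #{S ∈ A.powerset | S.sum id = n} ≤ fpq p q n := by
  rw [fpq, ← Set.ncard_coe_finset]
  refine Set.ncard_le_ncard (fun S hS ↦ ?_) ((finite_setOf_sum_eq n).subset fun S hS ↦ hS.2)
  simp only [coe_filter, mem_powerset] at hS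
  exact ⟨fun x hx ↦ hA x (hS.1 hx), hS.2⟩

theorem injective_pow_mul_pow {p q : ℕ} (hp : 1 < p) (hq : 1 < q) (hpq : p.Coprime q) :
    Function.Injective fun ab : ℕ × ℕ ↦ p ^ ab.1 * q ^ ab.2 := by
  have exp_le : ∀ a b c d : ℕ, p ^ a * q ^ b = p ^ c * q ^ d → a ≤ c := fun a b c d h ↦
    (Nat.pow_dvd_pow_iff_le_right hp).1 <|
      (Nat.Coprime.pow a d hpq).dvd_of_dvd_mul_right (h ▸ dvd_mul_right _ _)
  rintro ⟨a, b⟩ ⟨c, d⟩ h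
  obtain rfl : a = c := le_antisymm (exp_le a b c d h) (exp_le c d a b h.symm)
  obtain rfl : b = d := Nat.pow_right_injective hq (Nat.eq_of_mul_eq_mul_left (by positivity) h)
  rfl

def powMulPowGrid (p q k : ℕ) : Finset ℕ :=
  (range k ×ˢ range k).image fun ab ↦ p ^ ab.1 * q ^ ab.2

theorem card_powMulPowGrid {p q : ℕ} (hp : 1 < p) (hq : 1 < q) (hpq : p.Coprime q) (k : ℕ) :
    #(powMulPowGrid p q k) = k * k := by
  rw [powMulPowGrid, card_image_of_injective _ (injective_pow_mul_pow hp hq hpq), card_product,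
    card_range]

theorem sum_powMulPowGrid_le {p q : ℕ} (hp : 0 < p) (hq : 0 < q) (k : ℕ) :
    (powMulPowGrid p q k).sum id ≤ k * k * (p * q) ^ k := by
  have hle : ∀ x ∈ powMulPowGrid p q k, x ≤ (p * q) ^ k := by
    simp only [powMulPowGrid, mem_image, mem_product, mem_range]
    rintro _ ⟨⟨a, b⟩, ⟨ha, hb⟩, rfl⟩
    rw [mul_pow]
    exact Nat.mul_le_mul (Nat.pow_le_pow_right hp ha.le) (Nat.pow_le_pow_right hq hb.le)
  calc (powMulPowGrid p q k).sum id ≤ #(powMulPowGrid p q k) * (p * q) ^ k := by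
        simpa using sum_le_card_nsmul _ id _ hle
    _ ≤ k * k * (p * q) ^ k := by
        gcongr
        exact card_image_le.trans (by rw [card_product, card_range])

theorem two_pow_sq_le_sum_fpq {p q : ℕ} (hp : 1 < p) (hq : 1 < q) (hpq : p.Coprime q) (k : ℕ) :
    2 ^ (k * k) ≤ ∑ n ∈ range (k * k * (p * q) ^ k + 1), fpq p q n := by
  have hgrid : ∀ x ∈ powMulPowGrid p q k, ∃ a b : ℕ, x = p ^ a * q ^ b := by
    simp only [powMulPowGrid, mem_image]
    rintro _ ⟨⟨a, b⟩, -, rfl⟩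
    exact ⟨a, b, rfl⟩
  have hsum := sum_powMulPowGrid_le (zero_lt_one.trans hp) (zero_lt_one.trans hq) k
  calc 2 ^ (k * k) = 2 ^ #(powMulPowGrid p q k) := by rw [card_powMulPowGrid hp hq hpq]
    _ = _ := card_powerset_eq_sum_card_filter_sum_eq _
    _ ≤ ∑ n ∈ range ((powMulPowGrid p q k).sum id + 1), fpq p q n :=
        sum_le_sum fun n _ ↦ card_filter_sum_eq_le_fpq hgrid n
    _ ≤ _ := sum_le_sum_of_subset (range_subset_range.2 (by omega))

theorem stmt4 (p q : ℕ) (hp : 1 < p) (hpq' : p < q) (hpq : Nat.Coprime p q) :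
    ∀ N : ℕ, ∃ n : ℕ, N ≤ n ∧ fpq p q n < fpq p q (n + 1) := by
  intro N
  by_contra! hanti
  obtain ⟨E, hE⟩ := bddAbove_range_of_succ_le hanti
  obtain ⟨k, hk⟩ := exists_mul_lt_two_pow_sq (p * q) E
  have hupper :
      ∑ n ∈ range (k * k * (p * q) ^ k + 1), fpq p q n ≤ (k * k * (p * q) ^ k + 1) * E := by
    simpa using sum_le_card_nsmul (range _) (fpq p q) E fun n _ ↦ hE ⟨n, rfl⟩
  have := two_pow_sq_le_sum_fpq hp (hp.trans hpq') hpq k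
  omega
end

section
/- Let q > 2 be odd. For every n ≥ 1: if q does not divide n+1 then f_{2,q}(n+1) = f_{2,q}(n), and if q divides n+1 then f_{2,q}(n+1) = f_{2,q}(n) + f_{2,q}((n+1)/q). -/
open Filter Real

/-!
Split a representation `S` of `n` into its terms divisible by `q` and the others.
The others are pure powers of two, hence (by uniqueness of binary expansions) determined by
their sum, while dividing the former by `q` gives a representation `B` of some `m` with
`q * m ≤ n`. Since `q` is odd and `q ≠ 1`, no power of two is divisible by `q`, so this is a
bijection and `f(n) = ∑_{m ≤ n / q} f(m)`. Passing from `n` to `n + 1` adds the new summand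
`f((n + 1) / q)` exactly when `q ∣ n + 1`.
-/

open Finset

namespace Fpq

def binaryTerms (t : ℕ) : Finset ℕ := t.bitIndices.toFinset.image (2 ^ ·)

lemma sum_binaryTerms (t : ℕ) : (binaryTerms t).sum id = t := by
  rw [binaryTerms, sum_image fun _ _ _ _ h => Nat.pow_right_injective le_rfl h]
  exact sum_toFinset_bitIndices_two_pow t

lemma exists_eq_two_pow_of_mem_binaryTerms {t k : ℕ} (h : k ∈ binaryTerms t) :
    ∃ a, k = 2 ^ a := by
  obtain ⟨a, -, rfl⟩ := mem_image.mp h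
  exact ⟨a, rfl⟩

lemma eq_binaryTerms_sum {A : Finset ℕ} (h : ∀ k ∈ A, ∃ a, k = 2 ^ a) :
    A = binaryTerms (A.sum id) := by
  classical
  obtain ⟨E, -, rfl⟩ : ∃ E : Finset ℕ, ↑E ⊆ (Set.univ : Set ℕ) ∧ E.image (2 ^ ·) = A :=
    subset_set_image_iff.mp fun k hk => by simpa [eq_comm] using h k hk
  rw [sum_image fun _ _ _ _ h => Nat.pow_right_injective le_rfl h, binaryTerms]
  simp

variable {q : ℕ}

lemma not_dvd_two_pow (hq : 1 < q) (hodd : Odd q) (a : ℕ) : ¬ q ∣ 2 ^ a := fun h =>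
  hq.ne' (((Nat.coprime_two_right.mpr hodd).pow_right a).eq_one_of_dvd h)

lemma exists_eq_two_pow_of_not_dvd {k : ℕ} (h : ∃ a b : ℕ, k = 2 ^ a * q ^ b) (hk : ¬ q ∣ k) :
    ∃ a, k = 2 ^ a := by
  obtain ⟨a, _ | b, rfl⟩ := h
  · exact ⟨a, by simp⟩
  · exact absurd (Dvd.intro (2 ^ a * q ^ b) (by ring)) hk

lemma exists_div_eq_of_dvd (hq : 1 < q) (hodd : Odd q) {k : ℕ}
    (h : ∃ a b : ℕ, k = 2 ^ a * q ^ b) (hk : q ∣ k) : ∃ a b : ℕ, k / q = 2 ^ a * q ^ b := by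
  obtain ⟨a, _ | b, rfl⟩ := h
  · exact absurd (by simpa using hk) (not_dvd_two_pow hq hodd a)
  · refine ⟨a, b, ?_⟩
    rw [pow_succ, ← mul_assoc, Nat.mul_div_cancel _ (by omega)]

def IsRep (q n : ℕ) (S : Finset ℕ) : Prop :=
  (∀ k ∈ S, ∃ a b : ℕ, k = 2 ^ a * q ^ b) ∧ S.sum id = n

open scoped Classical in
noncomputable def reps (q n : ℕ) : Finset (Finset ℕ) :=
  (range (n + 1)).powerset.filter (IsRep q n)

lemma mem_reps {n : ℕ} {S : Finset ℕ} : S ∈ reps q n ↔ IsRep q n S := by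
  classical
  refine ⟨fun h => (mem_filter.mp h).2, fun h => mem_filter.mpr ⟨?_, h⟩⟩
  refine mem_powerset.mpr fun k hk => mem_range.mpr (Nat.lt_succ_of_le ?_)
  exact h.2 ▸ single_le_sum (f := id) (fun _ _ => Nat.zero_le _) hk

lemma fpq_two_eq_card_reps (q n : ℕ) : fpq 2 q n = (reps q n).card := by
  rw [fpq, ← Set.ncard_coe_finset]
  congr
  ext S
  exact mem_reps.symm

def quotPart (q : ℕ) (S : Finset ℕ) : Finset ℕ := (S.filter (q ∣ ·)).image (· / q)

def assemble (q n m : ℕ) (B : Finset ℕ) : Finset ℕ := binaryTerms (n - q * m) ∪ B.image (q * ·)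

lemma sum_image_mul (hq : 0 < q) (B : Finset ℕ) : (B.image (q * ·)).sum id = q * B.sum id := by
  rw [sum_image fun _ _ _ _ h => Nat.eq_of_mul_eq_mul_left hq h, mul_sum]
  rfl

lemma image_mul_quotPart (q : ℕ) (S : Finset ℕ) :
    (quotPart q S).image (q * ·) = S.filter (q ∣ ·) := by
  rw [quotPart, image_image]
  exact (image_congr fun k hk => Nat.mul_div_cancel' (mem_filter.mp hk).2).trans image_id

lemma quotPart_image_mul (hq : 0 < q) (B : Finset ℕ) : quotPart q (B.image (q * ·)) = B := by
  rw [quotPart, filter_true_of_mem (by simp), image_image]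
  exact (image_congr fun k _ => Nat.mul_div_cancel_left k hq).trans image_id

lemma quotPart_union (q : ℕ) (A B : Finset ℕ) :
    quotPart q (A ∪ B) = quotPart q A ∪ quotPart q B := by
  rw [quotPart, filter_union, image_union, quotPart, quotPart]

lemma quotPart_binaryTerms (hq : 1 < q) (hodd : Odd q) (t : ℕ) :
    quotPart q (binaryTerms t) = ∅ := by
  rw [quotPart, image_eq_empty, filter_eq_empty_iff]
  intro k hk
  obtain ⟨a, rfl⟩ := exists_eq_two_pow_of_mem_binaryTerms hk
  exact not_dvd_two_pow hq hodd a

lemma quotPart_assemble (hq : 1 < q) (hodd : Odd q) (n m : ℕ) (B : Finset ℕ) :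
    quotPart q (assemble q n m B) = B := by
  rw [assemble, quotPart_union, quotPart_binaryTerms hq hodd, quotPart_image_mul (by omega),
    empty_union]

lemma isRep_assemble (hq : 1 < q) (hodd : Odd q) {n m : ℕ} {B : Finset ℕ} (hB : IsRep q m B)
    (hm : q * m ≤ n) : IsRep q n (assemble q n m B) := by
  refine ⟨fun k hk => ?_, ?_⟩
  · rcases mem_union.mp hk with hk | hk
    · obtain ⟨a, rfl⟩ := exists_eq_two_pow_of_mem_binaryTerms hk
      exact ⟨a, 0, by simp⟩
    · obtain ⟨x, hx, rfl⟩ := mem_image.mp hk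
      obtain ⟨a, b, rfl⟩ := hB.1 x hx
      exact ⟨a, b + 1, by ring⟩
  · have hdisj : Disjoint (binaryTerms (n - q * m)) (B.image (q * ·)) := by
      refine disjoint_left.mpr fun k hk hk' => ?_
      obtain ⟨a, rfl⟩ := exists_eq_two_pow_of_mem_binaryTerms hk
      obtain ⟨x, -, hx⟩ := mem_image.mp hk'
      exact not_dvd_two_pow hq hodd a ⟨x, hx.symm⟩
    rw [assemble, sum_union hdisj, sum_binaryTerms, sum_image_mul (by omega), hB.2]
    omega

lemma isRep_quotPart (hq : 1 < q) (hodd : Odd q) {n : ℕ} {S : Finset ℕ} (hS : IsRep q n S) :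
    IsRep q ((quotPart q S).sum id) (quotPart q S) := by
  refine ⟨fun k hk => ?_, rfl⟩
  obtain ⟨j, hj, rfl⟩ := mem_image.mp hk
  exact exists_div_eq_of_dvd hq hodd (hS.1 j (mem_filter.mp hj).1) (mem_filter.mp hj).2

lemma mul_sum_quotPart_add_sum_filter_not_dvd (hq : 0 < q) (S : Finset ℕ) :
    q * (quotPart q S).sum id + (S.filter (¬ q ∣ ·)).sum id = S.sum id := by
  rw [← sum_image_mul hq, image_mul_quotPart]
  exact sum_filter_add_sum_filter_not S _ id

lemma mul_sum_quotPart_le (hq : 0 < q) {n : ℕ} {S : Finset ℕ} (hS : IsRep q n S) :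
    q * (quotPart q S).sum id ≤ n :=
  hS.2 ▸ (mul_sum_quotPart_add_sum_filter_not_dvd hq S).symm ▸ Nat.le_add_right _ _

lemma assemble_quotPart (hq : 0 < q) {n : ℕ} {S : Finset ℕ} (hS : IsRep q n S) :
    assemble q n ((quotPart q S).sum id) (quotPart q S) = S := by
  have hsplit := mul_sum_quotPart_add_sum_filter_not_dvd hq S
  rw [hS.2] at hsplit
  have hpow : S.filter (¬ q ∣ ·) = binaryTerms (n - q * (quotPart q S).sum id) := by
    refine (eq_binaryTerms_sum fun k hk => ?_).trans (by congr 1; omega)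
    exact exists_eq_two_pow_of_not_dvd (hS.1 k (mem_filter.mp hk).1) (mem_filter.mp hk).2
  rw [assemble, ← hpow, image_mul_quotPart, union_comm, filter_union_filter_not_eq]

lemma card_reps_eq_sum (hq : 1 < q) (hodd : Odd q) (n : ℕ) :
    (reps q n).card = ∑ m ∈ range (n / q + 1), (reps q m).card := by
  have hq0 : 0 < q := by omega
  rw [← card_sigma]
  refine card_nbij' (fun S => ⟨(quotPart q S).sum id, quotPart q S⟩)
    (fun p => assemble q n p.1 p.2) (fun S hS => ?_) (fun p hp => ?_)
    (fun S hS => assemble_quotPart hq0 (mem_reps.mp hS)) (fun p hp => ?_)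
  · have hS := mem_reps.mp hS
    have hle : (quotPart q S).sum id ≤ n / q :=
      (Nat.le_div_iff_mul_le hq0).mpr (mul_comm q _ ▸ mul_sum_quotPart_le hq0 hS)
    exact mem_sigma.mpr
      ⟨mem_range.mpr (Nat.lt_succ_of_le hle), mem_reps.mpr (isRep_quotPart hq hodd hS)⟩
  · obtain ⟨hm, hB⟩ := mem_sigma.mp hp
    have hm : q * p.1 ≤ n := by
      rw [mul_comm]
      exact (Nat.le_div_iff_mul_le hq0).mp (Nat.le_of_lt_succ (mem_range.mp hm))
    exact mem_reps.mpr (isRep_assemble hq hodd (mem_reps.mp hB) hm)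
  · obtain ⟨m, B⟩ := p
    have hB := (mem_reps.mp (mem_sigma.mp hp).2).2
    simp only [quotPart_assemble hq hodd, hB]

lemma fpq_two_eq_sum (hq : 1 < q) (hodd : Odd q) (n : ℕ) :
    fpq 2 q n = ∑ m ∈ range (n / q + 1), fpq 2 q m := by
  simp only [fpq_two_eq_card_reps]
  exact card_reps_eq_sum hq hodd n

end Fpq

theorem stmt5_general (q : ℕ) (hq : 2 < q) (hodd : Odd q) (n : ℕ) :
    (¬ q ∣ (n + 1) → fpq 2 q (n + 1) = fpq 2 q n) ∧
    (q ∣ (n + 1) → fpq 2 q (n + 1) = fpq 2 q n + fpq 2 q ((n + 1) / q)) := by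
  have hrec := Fpq.fpq_two_eq_sum (by omega : 1 < q) hodd
  have hdiv : (n + 1) / q = n / q + if q ∣ n + 1 then 1 else 0 := Nat.succ_div
  refine ⟨fun hdvd => ?_, fun hdvd => ?_⟩
  · rw [if_neg hdvd, add_zero] at hdiv
    rw [hrec (n + 1), hrec n, hdiv]
  · rw [if_pos hdvd] at hdiv
    rw [hrec (n + 1), hrec n, hdiv, sum_range_succ, ← hdiv]

theorem stmt5 (q : ℕ) (hq : 2 < q) (hodd : Odd q) (n : ℕ) (hn : 1 ≤ n) :
    (¬ q ∣ (n + 1) → fpq 2 q (n + 1) = fpq 2 q n) ∧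
    (q ∣ (n + 1) → fpq 2 q (n + 1) = fpq 2 q n + fpq 2 q ((n + 1) / q)) :=
  stmt5_general q hq hodd n
end

section
/- Let q > 2 be odd. For every n ≥ 1, f_{2,q}(n+1) ≥ f_{2,q}(n), i.e., f_{2,q} is nondecreasing on positive integers. -/
open Filter Real

/-!
Adding `1` in binary gives an injection from the representations of `n` into those of `n + 1`:
if `1, 2, …, 2^(k-1)` lie in `S` but `2^k` does not, replace these `k` parts by the single part
`2^k`.
-/

namespace BinaryCarry

open Finset

lemma exists_two_pow_notMem (S : Finset ℕ) : ∃ j, 2 ^ j ∉ S :=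
  ⟨S.sup id, fun h => (Nat.lt_two_pow_self).not_ge (le_sup (f := id) h)⟩

noncomputable def run (S : Finset ℕ) : ℕ := Nat.find (exists_two_pow_notMem S)

def chain (k : ℕ) : Finset ℕ := (range k).map ⟨(2 ^ ·), Nat.pow_right_injective le_rfl⟩

noncomputable def carry (S : Finset ℕ) : Finset ℕ := insert (2 ^ run S) (S \ chain (run S))

lemma two_pow_run_notMem (S : Finset ℕ) : 2 ^ run S ∉ S := Nat.find_spec (exists_two_pow_notMem S)

lemma mem_chain {k x : ℕ} : x ∈ chain k ↔ ∃ i < k, 2 ^ i = x := by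
  simp [chain]

lemma two_pow_mem_chain {i k : ℕ} : 2 ^ i ∈ chain k ↔ i < k := by
  simp [chain]

lemma sum_chain_add_one (k : ℕ) : (chain k).sum id + 1 = 2 ^ k := by
  have := geom_sum_mul_add 1 k
  norm_num at this
  simpa [chain] using this

lemma chain_run_subset (S : Finset ℕ) : chain (run S) ⊆ S := by
  intro x hx
  obtain ⟨i, hi, rfl⟩ := mem_chain.1 hx
  simpa using Nat.find_min (exists_two_pow_notMem S) hi

lemma two_pow_run_notMem_sdiff (S : Finset ℕ) : 2 ^ run S ∉ S \ chain (run S) :=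
  fun h => two_pow_run_notMem S (mem_sdiff.1 h).1

lemma sum_carry (S : Finset ℕ) : (carry S).sum id = S.sum id + 1 := by
  rw [carry, sum_insert (two_pow_run_notMem_sdiff S), ← sum_chain_add_one,
    ← sum_sdiff (f := id) (chain_run_subset S)]
  simp only [id]
  omega

lemma two_pow_run_mem_carry (S : Finset ℕ) : 2 ^ run S ∈ carry S := mem_insert_self _ _

lemma two_pow_notMem_carry {S : Finset ℕ} {j : ℕ} (hj : j < run S) : 2 ^ j ∉ carry S := by
  rw [carry, mem_insert, Finset.mem_sdiff, two_pow_mem_chain,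
    Nat.pow_right_injective le_rfl |>.eq_iff]
  omega

lemma run_le_of_carry_eq {S T : Finset ℕ} (h : carry S = carry T) : run S ≤ run T :=
  not_lt.1 fun hlt => two_pow_notMem_carry hlt (h ▸ two_pow_run_mem_carry T)

lemma carry_injective : Function.Injective carry := by
  intro S T h
  have hrun : run S = run T := le_antisymm (run_le_of_carry_eq h) (run_le_of_carry_eq h.symm)
  have recover : ∀ U : Finset ℕ, U = (carry U).erase (2 ^ run U) ∪ chain (run U) := fun U => by
    rw [carry, erase_insert (two_pow_run_notMem_sdiff U), sdiff_union_of_subset (chain_run_subset U)]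
  rw [recover S, recover T, h, hrun]

end BinaryCarry

lemma finite_setOf_sum_id_eq (m : ℕ) : {S : Finset ℕ | S.sum id = m}.Finite := by
  refine (Finset.range (m + 1)).powerset.finite_toSet.subset fun S hS => ?_
  rw [Finset.coe_powerset, Set.mem_preimage, Set.mem_powerset_iff, Finset.coe_subset]
  intro x hx
  have := Finset.single_le_sum (f := id) (fun i _ => Nat.zero_le i) hx
  rw [show S.sum id = m from hS] at this
  exact Finset.mem_range.2 (Nat.lt_succ_of_le this)

open BinaryCarry in
theorem ncard_setOf_sum_id_eq_le_succ (P : ℕ → Prop) (hP : ∀ j, P (2 ^ j)) (n : ℕ) :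
    {S : Finset ℕ | (∀ k ∈ S, P k) ∧ S.sum id = n}.ncard ≤
      {S : Finset ℕ | (∀ k ∈ S, P k) ∧ S.sum id = n + 1}.ncard := by
  refine Set.ncard_le_ncard_of_injOn carry ?_ carry_injective.injOn
    ((finite_setOf_sum_id_eq (n + 1)).subset fun S hS => hS.2)
  rintro S ⟨hSP, rfl⟩
  refine ⟨fun k hk => ?_, sum_carry S⟩
  rcases Finset.mem_insert.1 hk with rfl | hk
  · exact hP _
  · exact hSP k (Finset.mem_sdiff.1 hk).1

theorem stmt6_general (q : ℕ) (n : ℕ) :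
    fpq 2 q n ≤ fpq 2 q (n + 1) :=
  ncard_setOf_sum_id_eq_le_succ _ (fun j => ⟨j, 0, by simp⟩) n

theorem stmt6 (q : ℕ) (hq : 2 < q) (hodd : Odd q) (n : ℕ) (hn : 1 ≤ n) :
    fpq 2 q n ≤ fpq 2 q (n + 1) :=
  stmt6_general q n
end

section
/- Let q > 2 be odd. Then the density of n ≤ x with f_{2,q}(n+1) = f_{2,q}(n) tends to (q-1)/q as x → ∞. -/
open Filter Real

/-!
For odd `q > 1`, a part `2^a q^b` is divisible by `q` exactly when `b ≥ 1`; the remaining parts are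
powers of two. By uniqueness of binary expansions, a representation of `n` is determined by its set
`T` of `q`-divisible parts, and every such `T` with `∑ T ≤ n` is completed to a representation of
`n` by the binary expansion of `n - ∑ T`. So `f_{2,q}(n)` counts the sets `T` with `∑ T ≤ n`, and
`f_{2,q}(n+1) > f_{2,q}(n)` iff some `T` has `∑ T = n + 1`, i.e. iff `q ∣ n + 1`.
-/

namespace Fpq

open Finset

variable {q : ℕ}

def binaryParts (m : ℕ) : Finset ℕ := m.bitIndices.toFinset.image (2 ^ ·)

lemma sum_binaryParts (m : ℕ) : (binaryParts m).sum id = m := by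
  rw [binaryParts, sum_image fun _ _ _ _ h => Nat.pow_right_injective le_rfl h]
  exact sum_toFinset_bitIndices_two_pow m

lemma exists_eq_two_pow_of_mem_binaryParts {m k : ℕ} (hk : k ∈ binaryParts m) :
    ∃ a, k = 2 ^ a := by
  obtain ⟨a, -, rfl⟩ := mem_image.mp hk
  exact ⟨a, rfl⟩

lemma binaryParts_sum_id {S : Finset ℕ} (hS : ∀ k ∈ S, ∃ a, k = 2 ^ a) :
    binaryParts (S.sum id) = S := by
  obtain ⟨E, -, rfl⟩ : ∃ E : Finset ℕ, ↑E ⊆ (Set.univ : Set ℕ) ∧ E.image (2 ^ ·) = S :=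
    subset_set_image_iff.mp fun k hk => by
      obtain ⟨a, rfl⟩ := hS k hk
      exact ⟨a, trivial, rfl⟩
  rw [sum_image fun _ _ _ _ h => Nat.pow_right_injective le_rfl h, binaryParts]
  simp

def divisiblePartSets (q n : ℕ) : Set (Finset ℕ) :=
  {T | (∀ k ∈ T, q ∣ k ∧ ∃ a b : ℕ, k = 2 ^ a * q ^ b) ∧ T.sum id ≤ n}

lemma filter_not_dvd_eq_binaryParts {S : Finset ℕ}
    (hS : ∀ k ∈ S, ∃ a b : ℕ, k = 2 ^ a * q ^ b) :
    S.filter (¬ q ∣ ·) = binaryParts (S.sum id - (S.filter (q ∣ ·)).sum id) := by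
  rw [← sum_filter_add_sum_filter_not S (q ∣ ·) id, Nat.add_sub_cancel_left]
  refine (binaryParts_sum_id fun k hk => ?_).symm
  obtain ⟨hkS, hkq⟩ := mem_filter.mp hk
  obtain ⟨a, b, rfl⟩ := hS k hkS
  cases b with
  | zero => exact ⟨a, by simp⟩
  | succ b => exact absurd (Dvd.dvd.mul_left (dvd_pow_self q b.succ_ne_zero) _) hkq

lemma disjoint_binaryParts (hq : 1 < q) (hodd : Odd q) {T : Finset ℕ} (hT : ∀ k ∈ T, q ∣ k)
    (m : ℕ) : Disjoint (binaryParts m) T := by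
  refine disjoint_left.mpr fun k hk hkT => ?_
  obtain ⟨a, rfl⟩ := exists_eq_two_pow_of_mem_binaryParts hk
  exact not_dvd_two_pow hq hodd a (hT _ hkT)

lemma filter_dvd_binaryParts_union (hq : 1 < q) (hodd : Odd q) {T : Finset ℕ}
    (hT : ∀ k ∈ T, q ∣ k) (m : ℕ) : (binaryParts m ∪ T).filter (q ∣ ·) = T := by
  rw [filter_union, filter_true_of_mem hT, filter_false_of_mem, empty_union]
  intro k hk
  obtain ⟨a, rfl⟩ := exists_eq_two_pow_of_mem_binaryParts hk
  exact not_dvd_two_pow hq hodd a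

theorem fpq_two_eq_ncard_divisiblePartSets (hq : 1 < q) (hodd : Odd q) (n : ℕ) :
    fpq 2 q n = (divisiblePartSets q n).ncard := by
  refine Set.ncard_congr (fun S _ => S.filter (q ∣ ·)) ?_ ?_ ?_
  · rintro S ⟨hS, rfl⟩
    refine ⟨fun k hk => ?_, sum_le_sum_of_subset (filter_subset _ _)⟩
    obtain ⟨hkS, hkq⟩ := mem_filter.mp hk
    exact ⟨hkq, hS k hkS⟩
  · rintro S S' ⟨hS, rfl⟩ ⟨hS', hsum⟩ (h : S.filter (q ∣ ·) = S'.filter (q ∣ ·))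
    rw [← filter_union_filter_not_eq (q ∣ ·) S, ← filter_union_filter_not_eq (q ∣ ·) S',
      filter_not_dvd_eq_binaryParts hS, filter_not_dvd_eq_binaryParts hS', h, hsum]
  · rintro T ⟨hT, hsum⟩
    have hTq : ∀ k ∈ T, q ∣ k := fun k hk => (hT k hk).1
    refine ⟨binaryParts (n - T.sum id) ∪ T, ⟨fun k hk => ?_, ?_⟩,
      filter_dvd_binaryParts_union hq hodd hTq _⟩
    · rcases mem_union.mp hk with hk | hk
      · obtain ⟨a, rfl⟩ := exists_eq_two_pow_of_mem_binaryParts hk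
        exact ⟨a, 0, by simp⟩
      · exact (hT k hk).2
    · rw [sum_union (disjoint_binaryParts hq hodd hTq _), sum_binaryParts, Nat.sub_add_cancel hsum]

lemma divisiblePartSets_finite (q n : ℕ) : (divisiblePartSets q n).Finite := by
  refine (range (n + 1)).powerset.finite_toSet.subset fun T hT => ?_
  rw [mem_coe, mem_powerset]
  intro k hk
  have := (single_le_sum (f := id) (fun _ _ => Nat.zero_le _) hk).trans hT.2
  exact mem_range.mpr (Nat.lt_succ_of_le this)

lemma exists_mem_divisiblePartSets_sum_eq_iff (hq : 0 < q) (m : ℕ) :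
    (∃ T ∈ divisiblePartSets q m, T.sum id = m) ↔ q ∣ m := by
  constructor
  · rintro ⟨T, ⟨hT, -⟩, rfl⟩
    exact dvd_sum fun k hk => (hT k hk).1
  · rintro ⟨c, rfl⟩
    have hsum : ((binaryParts c).image (q * ·)).sum id = q * c := by
      rw [sum_image fun _ _ _ _ h => Nat.eq_of_mul_eq_mul_left hq h]
      simpa [mul_sum] using congrArg (q * ·) (sum_binaryParts c)
    refine ⟨(binaryParts c).image (q * ·), ⟨fun k hk => ?_, hsum.le⟩, hsum⟩
    obtain ⟨j, hj, rfl⟩ := mem_image.mp hk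
    obtain ⟨a, rfl⟩ := exists_eq_two_pow_of_mem_binaryParts hj
    exact ⟨dvd_mul_right q _, a, 1, by ring⟩

theorem fpq_two_succ_eq_iff (hq : 1 < q) (hodd : Odd q) (n : ℕ) :
    fpq 2 q (n + 1) = fpq 2 q n ↔ ¬ q ∣ n + 1 := by
  have hmono : divisiblePartSets q n ⊆ divisiblePartSets q (n + 1) :=
    fun T hT => ⟨hT.1, hT.2.trans n.le_succ⟩
  rw [fpq_two_eq_ncard_divisiblePartSets hq hodd, fpq_two_eq_ncard_divisiblePartSets hq hodd,
    ← exists_mem_divisiblePartSets_sum_eq_iff (by omega)]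
  constructor
  · rintro h ⟨T, hT, hsum⟩
    rw [← Set.eq_of_subset_of_ncard_le hmono h.le (divisiblePartSets_finite q (n + 1))] at hT
    exact absurd hT.2 (by omega)
  · intro h
    refine congrArg Set.ncard (Set.Subset.antisymm (fun T hT => ⟨hT.1, ?_⟩) hmono)
    exact Nat.le_of_lt_succ (lt_of_le_of_ne hT.2 fun hsum => h ⟨T, hT, hsum⟩)

lemma card_filter_not_dvd_succ_add_div (hq : 1 < q) (x : ℕ) :
    #{n ∈ Icc 1 x | ¬ q ∣ n + 1} + (x + 1) / q = x := by
  have hmultiples : {n ∈ Icc 1 x | q ∣ n + 1} = {e ∈ range (x + 1) | q ∣ e + 1} := by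
    ext e
    simp only [mem_filter, mem_Icc, mem_range, and_congr_left_iff]
    intro he
    have : e ≠ 0 := by rintro rfl; exact hq.ne' (Nat.dvd_one.mp he)
    omega
  rw [← Nat.card_multiples, ← hmultiples, add_comm, card_filter_add_card_filter_not, Nat.card_Icc,
    Nat.add_sub_cancel]

lemma abs_natCast_succ_div_sub_div_le_one (hq : 0 < q) (x : ℕ) :
    |(((x + 1) / q : ℕ) : ℝ) - x / q| ≤ 1 := by
  have hq' : (0 : ℝ) < q := by exact_mod_cast hq
  have hdiv := Nat.div_add_mod (x + 1) q
  have hmod : (x + 1) % q + 1 ≤ q := Nat.mod_lt _ hq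
  set d := (x + 1) / q
  set r := (x + 1) % q
  have hx : (x : ℝ) = q * d + r - 1 := by
    rw [eq_sub_iff_add_eq]; exact_mod_cast hdiv.symm
  have hr : (r : ℝ) + 1 ≤ q := by exact_mod_cast hmod
  rw [show (d : ℝ) - x / q = (1 - r) / q by field_simp; rw [hx]; ring, abs_div, abs_of_pos hq',
    div_le_one hq', abs_le]
  constructor <;> linarith [(r.cast_nonneg : (0 : ℝ) ≤ r)]

lemma tendsto_div_of_abs_sub_mul_le {f : ℕ → ℝ} {c C : ℝ} (h : ∀ x, |f x - c * x| ≤ C) :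
    Tendsto (fun x => f x / x) atTop (nhds c) := by
  have hsmall : Tendsto (fun x : ℕ => (f x - c * x) / x) atTop (nhds 0) :=
    squeeze_zero_norm (fun x => by rw [norm_div, Real.norm_natCast]; gcongr; exact h x)
      (tendsto_const_div_atTop_nhds_zero_nat C)
  refine (by simpa using hsmall.const_add c : Tendsto _ _ _).congr' ?_
  filter_upwards [eventually_ne_atTop 0] with x hx
  field_simp
  ring

end Fpq

theorem stmt7 (q : ℕ) (hq : 2 < q) (hodd : Odd q) :
    Filter.Tendsto (fun x : ℕ =>
        (((Finset.Icc 1 x).filter (fun n => fpq 2 q (n + 1) = fpq 2 q n)).card : ℝ) / x)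
      Filter.atTop (nhds ((q - 1) / q)) := by
  have hq1 : 1 < q := by omega
  have hq0 : (q : ℝ) ≠ 0 := by positivity
  refine Fpq.tendsto_div_of_abs_sub_mul_le (C := 1) fun x => ?_
  have hcard : (((Finset.Icc 1 x).filter fun n => fpq 2 q (n + 1) = fpq 2 q n).card : ℝ) =
      x - ((x + 1) / q : ℕ) := by
    rw [Finset.filter_congr fun n _ => Fpq.fpq_two_succ_eq_iff hq1 hodd n, eq_sub_iff_add_eq]
    exact_mod_cast Fpq.card_filter_not_dvd_succ_add_div hq1 x
  rw [hcard, ← abs_neg]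
  convert Fpq.abs_natCast_succ_div_sub_div_le_one (by omega : 0 < q) x using 2
  field_simp
  ring
end

section
/- Let q₂ > q₁ > 2 be odd integers. Then for every n ≥ 1, f_{2,q₁}(n) ≥ f_{2,q₂}(n). -/
/-!
In a representation of `n`, the parts not divisible by the odd number `q` are distinct powers
of `2`, so they are the binary digits of their sum, while the parts divisible by `q` are `q`
times a representation of some `t ≤ n / q`. Hence `f_{2,q}(n) = ∑_{t ≤ n / q} f_{2,q}(t)`, and
since `n / q₂ ≤ n / q₁`, strong induction on `n` compares the two recursions.
-/

open Filter Real

open Finset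

def twoPowDigits (m : ℕ) : Finset ℕ := m.bitIndices.toFinset.image (2 ^ ·)

lemma sum_twoPowDigits (m : ℕ) : (twoPowDigits m).sum id = m := by
  rw [twoPowDigits, sum_image fun _ _ _ _ h => Nat.pow_right_injective le_rfl h]
  exact sum_toFinset_bitIndices_two_pow m

lemma exists_eq_two_pow_of_mem_twoPowDigits {m k : ℕ} (hk : k ∈ twoPowDigits m) :
    ∃ a, k = 2 ^ a := by
  obtain ⟨a, -, rfl⟩ := mem_image.mp hk
  exact ⟨a, rfl⟩

lemma eq_twoPowDigits_sum {A : Finset ℕ} (hA : ∀ k ∈ A, ∃ a, k = 2 ^ a) :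
    A = twoPowDigits (A.sum id) := by
  obtain ⟨E, -, rfl⟩ : ∃ E : Finset ℕ, (E : Set ℕ) ⊆ Set.univ ∧ E.image (2 ^ ·) = A :=
    subset_set_image_iff.mp fun k hk => by simpa [eq_comm] using hA k hk
  rw [twoPowDigits, sum_image fun _ _ _ _ h => Nat.pow_right_injective le_rfl h]
  simp

lemma image_div_image_mul {q : ℕ} (hq : 0 < q) (T : Finset ℕ) :
    (T.image (q * ·)).image (· / q) = T := by
  simp [image_image, Function.comp_def, Nat.mul_div_cancel_left _ hq]

lemma image_mul_image_div {q : ℕ} {S : Finset ℕ} (hS : ∀ k ∈ S, q ∣ k) :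
    (S.image (· / q)).image (q * ·) = S := by
  rw [image_image]
  exact (image_congr fun k hk => Nat.mul_div_cancel' (hS k hk)).trans image_id

lemma sum_image_mul {q : ℕ} (hq : 0 < q) (T : Finset ℕ) :
    (T.image (q * ·)).sum id = q * T.sum id := by
  rw [sum_image fun _ _ _ _ h => Nat.eq_of_mul_eq_mul_left hq h, mul_sum]
  rfl

lemma not_dvd_two_pow {q : ℕ} (hq : 1 < q) (hodd : Odd q) (a : ℕ) : ¬ q ∣ 2 ^ a := fun h =>
  hq.ne' <| (Nat.Coprime.pow_right a (Nat.coprime_two_right.mpr hodd)).eq_one_of_dvd h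

def IsPowProdSet (p q : ℕ) (S : Finset ℕ) : Prop := ∀ k ∈ S, ∃ a b : ℕ, k = p ^ a * q ^ b

open scoped Classical in
noncomputable def powProdReps (p q n : ℕ) : Finset (Finset ℕ) :=
  (range (n + 1)).powerset.filter fun S => IsPowProdSet p q S ∧ S.sum id = n

lemma mem_powProdReps {p q n : ℕ} {S : Finset ℕ} :
    S ∈ powProdReps p q n ↔ IsPowProdSet p q S ∧ S.sum id = n := by
  classical
  rw [powProdReps, mem_filter, mem_powerset, and_iff_right_iff_imp]
  rintro ⟨-, rfl⟩ k hk
  exact mem_range_succ_iff.mpr (single_le_sum (f := id) (fun _ _ => Nat.zero_le _) hk)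

lemma fpq_eq_card_powProdReps (p q n : ℕ) : fpq p q n = (powProdReps p q n).card := by
  rw [fpq, ← Set.ncard_coe_finset]
  congr 1
  ext S
  exact mem_powProdReps.symm

lemma powProdReps_zero {p q : ℕ} (hp : 0 < p) (hq : 0 < q) : powProdReps p q 0 = {∅} := by
  ext S
  rw [mem_powProdReps, mem_singleton]
  constructor
  · rintro ⟨hS, hsum⟩
    refine eq_empty_of_forall_notMem fun k hk => ?_
    obtain ⟨a, b, rfl⟩ := hS k hk
    exact (Nat.mul_pos (pow_pos hp a) (pow_pos hq b)).ne'
      ((sum_eq_zero_iff.mp hsum) _ hk)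
  · rintro rfl
    exact ⟨fun k hk => absurd hk (notMem_empty k), sum_empty⟩

lemma fpq_zero {p q : ℕ} (hp : 0 < p) (hq : 0 < q) : fpq p q 0 = 1 := by
  rw [fpq_eq_card_powProdReps, powProdReps_zero hp hq, card_singleton]

lemma IsPowProdSet.image_mul {p q : ℕ} {T : Finset ℕ} (hT : IsPowProdSet p q T) :
    IsPowProdSet p q (T.image (q * ·)) := by
  rintro _ hk
  obtain ⟨k, hkT, rfl⟩ := mem_image.mp hk
  obtain ⟨a, b, rfl⟩ := hT k hkT
  exact ⟨a, b + 1, by ring⟩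

lemma IsPowProdSet.union {p q : ℕ} {S T : Finset ℕ} (hS : IsPowProdSet p q S)
    (hT : IsPowProdSet p q T) : IsPowProdSet p q (S ∪ T) := by
  intro k hk
  rcases mem_union.mp hk with hk | hk
  exacts [hS k hk, hT k hk]

lemma isPowProdSet_twoPowDigits (q m : ℕ) : IsPowProdSet 2 q (twoPowDigits m) := by
  intro k hk
  obtain ⟨a, rfl⟩ := exists_eq_two_pow_of_mem_twoPowDigits hk
  exact ⟨a, 0, by ring⟩

lemma IsPowProdSet.exists_eq_two_pow {q : ℕ} {S : Finset ℕ} (hS : IsPowProdSet 2 q S)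
    {k : ℕ} (hk : k ∈ S) (hqk : ¬ q ∣ k) : ∃ a, k = 2 ^ a := by
  obtain ⟨a, _ | b, rfl⟩ := hS k hk
  · exact ⟨a, by ring⟩
  · exact absurd ⟨2 ^ a * q ^ b, by ring⟩ hqk

lemma IsPowProdSet.image_div {q : ℕ} (hq : 1 < q) (hodd : Odd q) {S : Finset ℕ}
    (hS : IsPowProdSet 2 q S) : IsPowProdSet 2 q ((S.filter (q ∣ ·)).image (· / q)) := by
  rintro _ hk
  obtain ⟨k, hkq, rfl⟩ := mem_image.mp hk
  obtain ⟨hkS, hqk⟩ := mem_filter.mp hkq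
  obtain ⟨a, _ | b, rfl⟩ := hS k hkS
  · exact absurd (by simpa using hqk) (not_dvd_two_pow hq hodd a)
  · refine ⟨a, b, ?_⟩
    rw [pow_succ, ← mul_assoc, Nat.mul_div_cancel _ (by omega)]

lemma disjoint_twoPowDigits_image_mul {q : ℕ} (hq : 1 < q) (hodd : Odd q)
    (m : ℕ) (T : Finset ℕ) : Disjoint (twoPowDigits m) (T.image (q * ·)) := by
  refine disjoint_left.mpr fun k hk hkT => ?_
  obtain ⟨a, rfl⟩ := exists_eq_two_pow_of_mem_twoPowDigits hk
  obtain ⟨k, -, hk⟩ := mem_image.mp hkT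
  exact not_dvd_two_pow hq hodd a ⟨k, hk.symm⟩

lemma filter_dvd_twoPowDigits_union_image_mul {q : ℕ} (hq : 1 < q) (hodd : Odd q)
    (m : ℕ) (T : Finset ℕ) :
    (twoPowDigits m ∪ T.image (q * ·)).filter (q ∣ ·) = T.image (q * ·) := by
  have hdigits : (twoPowDigits m).filter (q ∣ ·) = ∅ := filter_false_of_mem fun _ hk => by
    obtain ⟨a, rfl⟩ := exists_eq_two_pow_of_mem_twoPowDigits hk
    exact not_dvd_two_pow hq hodd a
  have hmul : (T.image (q * ·)).filter (q ∣ ·) = T.image (q * ·) :=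
    filter_true_of_mem fun _ hk => by
      obtain ⟨k, -, rfl⟩ := mem_image.mp hk
      exact dvd_mul_right q k
  rw [filter_union, hdigits, hmul, empty_union]

lemma sum_twoPowDigits_union_image_mul {q : ℕ} (hq : 1 < q) (hodd : Odd q)
    (m : ℕ) (T : Finset ℕ) :
    (twoPowDigits m ∪ T.image (q * ·)).sum id = m + q * T.sum id := by
  rw [sum_union (disjoint_twoPowDigits_image_mul hq hodd m T), sum_twoPowDigits,
    sum_image_mul (by omega)]

lemma mul_sum_image_div_filter_dvd {q : ℕ} (hq : 0 < q) (S : Finset ℕ) :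
    q * ((S.filter (q ∣ ·)).image (· / q)).sum id = (S.filter (q ∣ ·)).sum id := by
  rw [← sum_image_mul hq, image_mul_image_div fun k hk => (mem_filter.mp hk).2]

lemma card_powProdReps_two_eq_card_biUnion {q : ℕ} (hq : 1 < q) (hodd : Odd q) (n : ℕ) :
    (powProdReps 2 q n).card = ((range (n / q + 1)).biUnion (powProdReps 2 q)).card := by
  have hq0 : 0 < q := by omega
  refine card_nbij' (fun S => (S.filter (q ∣ ·)).image (· / q))
    (fun T => twoPowDigits (n - q * T.sum id) ∪ T.image (q * ·)) ?_ ?_ ?_ ?_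
  · intro S hS
    obtain ⟨hSrep, hSsum⟩ := mem_powProdReps.mp hS
    refine mem_biUnion.mpr ⟨_, ?_, mem_powProdReps.mpr ⟨hSrep.image_div hq hodd, rfl⟩⟩
    rw [mem_range_succ_iff, Nat.le_div_iff_mul_le hq0, mul_comm,
      mul_sum_image_div_filter_dvd hq0, ← hSsum]
    exact sum_le_sum_of_subset (filter_subset _ _)
  · intro T hT
    obtain ⟨t, ht, hTt⟩ := mem_biUnion.mp hT
    obtain ⟨hTrep, rfl⟩ := mem_powProdReps.mp hTt
    have : q * T.sum id ≤ n := by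
      rw [mem_range_succ_iff, Nat.le_div_iff_mul_le hq0] at ht
      linarith
    refine mem_powProdReps.mpr ⟨(isPowProdSet_twoPowDigits q _).union hTrep.image_mul, ?_⟩
    rw [sum_twoPowDigits_union_image_mul hq hodd]
    omega
  · intro S hS
    obtain ⟨hSrep, hSsum⟩ := mem_powProdReps.mp hS
    have hnondvd : (S.filter (¬ q ∣ ·)).sum id = n - (S.filter (q ∣ ·)).sum id := by
      rw [← hSsum, ← sum_filter_add_sum_filter_not S (q ∣ ·), Nat.add_sub_cancel_left]
    have hdigits : twoPowDigits ((S.filter (¬ q ∣ ·)).sum id) = S.filter (¬ q ∣ ·) :=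
      (eq_twoPowDigits_sum fun k hk =>
        hSrep.exists_eq_two_pow (mem_filter.mp hk).1 (mem_filter.mp hk).2).symm
    dsimp only
    rw [mul_sum_image_div_filter_dvd hq0, ← hnondvd, hdigits,
      image_mul_image_div fun k hk => (mem_filter.mp hk).2, union_comm,
      filter_union_filter_not_eq]
  · intro T _
    dsimp only
    rw [filter_dvd_twoPowDigits_union_image_mul hq hodd, image_div_image_mul hq0]

lemma fpq_two_eq_sum {q : ℕ} (hq : 1 < q) (hodd : Odd q) (n : ℕ) :
    fpq 2 q n = ∑ t ∈ range (n / q + 1), fpq 2 q t := by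
  classical
  simp only [fpq_eq_card_powProdReps]
  rw [card_powProdReps_two_eq_card_biUnion hq hodd, card_biUnion]
  intro s _ t _ hst
  refine disjoint_left.mpr fun S hs ht => hst ?_
  rw [← (mem_powProdReps.mp hs).2, (mem_powProdReps.mp ht).2]

lemma fpq_two_le_of_le {q₁ q₂ : ℕ} (hq₁ : 1 < q₁) (hq : q₁ ≤ q₂) (hodd₁ : Odd q₁) (hodd₂ : Odd q₂)
    (n : ℕ) : fpq 2 q₂ n ≤ fpq 2 q₁ n := by
  induction n using Nat.strong_induction_on with
  | _ n ih =>
    rcases Nat.eq_zero_or_pos n with rfl | hn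
    · rw [fpq_zero two_pos (by omega), fpq_zero two_pos (by omega)]
    rw [fpq_two_eq_sum (hq₁.trans_le hq) hodd₂, fpq_two_eq_sum hq₁ hodd₁]
    calc ∑ t ∈ range (n / q₂ + 1), fpq 2 q₂ t
        ≤ ∑ t ∈ range (n / q₂ + 1), fpq 2 q₁ t := sum_le_sum fun t ht =>
          ih t ((mem_range_succ_iff.mp ht).trans_lt (Nat.div_lt_self hn (by omega)))
      _ ≤ ∑ t ∈ range (n / q₁ + 1), fpq 2 q₁ t :=
          sum_le_sum_of_subset (range_subset_range.mpr
            (Nat.succ_le_succ (Nat.div_le_div_left hq (by omega))))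

theorem stmt9_general (q₁ q₂ : ℕ) (h1 : 2 < q₁) (h2 : q₁ < q₂)
    (hodd1 : Odd q₁) (hodd2 : Odd q₂) (n : ℕ) :
    fpq 2 q₂ n ≤ fpq 2 q₁ n :=
  fpq_two_le_of_le (by omega) h2.le hodd1 hodd2 n

theorem stmt9 (q₁ q₂ : ℕ) (h1 : 2 < q₁) (h2 : q₁ < q₂)
    (hodd1 : Odd q₁) (hodd2 : Odd q₂) (n : ℕ) (hn : 1 ≤ n) :
    fpq 2 q₂ n ≤ fpq 2 q₁ n :=
  stmt9_general q₁ q₂ h1 h2 hodd1 hodd2 n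
end

section
/- Let q > 2 be odd. Then f_{2,q}(n) equals the q-ary partition function b_q(n), the number of partitions of n into (not necessarily distinct) powers of q. -/
open Filter Real

/-- The `m`-ary partition function: number of multisets of powers of `m` summing to `n`. -/
noncomputable def bary (m n : ℕ) : ℕ :=
  Set.ncard {S : Multiset ℕ | (∀ k ∈ S, ∃ a : ℕ, k = m ^ a) ∧ S.sum = n}

namespace Stmt10Aux

/-- The forward map: replace each element `k` of `S` by `ordProj[2] k` copies of
`ordCompl[2] k`. -/
def phi (S : Finset ℕ) : Multiset ℕ :=
  S.val.bind fun k => Multiset.replicate (ordProj[2] k) (ordCompl[2] k)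

lemma fact2 {x : ℕ} (hx : Odd x) (a : ℕ) : (2 ^ a * x).factorization 2 = a := by
  have hx0 : x ≠ 0 := by rintro rfl; simp [Nat.odd_iff] at hx
  have h2 : ¬ (2 ∣ x) := by rw [Nat.two_dvd_ne_zero]; exact Nat.odd_iff.1 hx
  rw [Nat.factorization_mul (pow_ne_zero _ two_ne_zero) hx0]
  simp [Nat.Prime.factorization_pow Nat.prime_two,
    Nat.factorization_eq_zero_of_not_dvd h2]

lemma ordProj_eq {x : ℕ} (hx : Odd x) (a : ℕ) : ordProj[2] (2 ^ a * x) = 2 ^ a := by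
  rw [fact2 hx]

lemma ordCompl_eq {x : ℕ} (hx : Odd x) (a : ℕ) : ordCompl[2] (2 ^ a * x) = x := by
  rw [ordProj_eq hx]
  exact Nat.mul_div_cancel_left x (pow_pos two_pos a)

lemma odd_ordCompl {k : ℕ} (hk : k ≠ 0) : Odd (ordCompl[2] k) := by
  rw [Nat.odd_iff, ← Nat.two_dvd_ne_zero]
  exact Nat.not_dvd_ordCompl Nat.prime_two hk

lemma decomp {k : ℕ} (hk : k ≠ 0) : 2 ^ (k.factorization 2) * ordCompl[2] k = k :=
  Nat.ordProj_mul_ordCompl_eq_self k 2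

lemma phi_count (S : Finset ℕ) (x : ℕ) :
    (phi S).count x = ∑ k ∈ S, if ordCompl[2] k = x then ordProj[2] k else 0 := by
  rw [phi, Multiset.count_bind]
  simp only [Multiset.count_replicate]
  rfl

lemma phi_sum (S : Finset ℕ) (hS : ∀ k ∈ S, k ≠ 0) : (phi S).sum = S.sum id := by
  rw [phi, Multiset.sum_bind]
  show ∑ k ∈ S, (Multiset.replicate (ordProj[2] k) (ordCompl[2] k)).sum = _
  refine Finset.sum_congr rfl fun k hk => ?_
  rw [Multiset.sum_replicate, smul_eq_mul, Nat.ordProj_mul_ordCompl_eq_self]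
  rfl

lemma mem_phi {S : Finset ℕ} {x : ℕ} : x ∈ phi S ↔ ∃ k ∈ S, x = ordCompl[2] k := by
  simp only [phi, Multiset.mem_bind, Multiset.mem_replicate]
  constructor
  · rintro ⟨k, hk, -, rfl⟩; exact ⟨k, hk, rfl⟩
  · rintro ⟨k, hk, rfl⟩
    exact ⟨k, hk, pow_ne_zero _ two_ne_zero, rfl⟩

/-- The set of binary digits used at a fixed odd part `x`. -/
def digitSet (S : Finset ℕ) (x : ℕ) : Finset ℕ :=
  (S.filter fun k => ordCompl[2] k = x).image fun k => k.factorization 2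

lemma mem_of_digit {S : Finset ℕ} (hS : ∀ k ∈ S, k ≠ 0) {x a : ℕ}
    (ha : a ∈ digitSet S x) : 2 ^ a * x ∈ S := by
  simp only [digitSet, Finset.mem_image, Finset.mem_filter] at ha
  obtain ⟨k, ⟨hkS, hkx⟩, rfl⟩ := ha
  rwa [← hkx, decomp (hS k hkS)]

lemma digit_of_mem {S : Finset ℕ} {k : ℕ} (hk : k ∈ S) :
    k.factorization 2 ∈ digitSet S (ordCompl[2] k) := by
  simp only [digitSet, Finset.mem_image, Finset.mem_filter]
  exact ⟨k, ⟨hk, rfl⟩, rfl⟩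

lemma sum_eq_digit_sum (S : Finset ℕ) (hS : ∀ k ∈ S, k ≠ 0) (x : ℕ) :
    (∑ k ∈ S, if ordCompl[2] k = x then ordProj[2] k else 0) =
      ∑ a ∈ digitSet S x, 2 ^ a := by
  have hinj : ∀ k ∈ S.filter (fun k => ordCompl[2] k = x),
      ∀ k' ∈ S.filter (fun k => ordCompl[2] k = x),
      k.factorization 2 = k'.factorization 2 → k = k' := by
    intro k hk k' hk' h
    rw [Finset.mem_filter] at hk hk'
    have e1 : k = 2 ^ k.factorization 2 * x := by
      rw [← hk.2]; exact (decomp (hS k hk.1)).symm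
    have e2 : k' = 2 ^ k'.factorization 2 * x := by
      rw [← hk'.2]; exact (decomp (hS k' hk'.1)).symm
    rw [e1, e2, h]
  rw [← Finset.sum_filter, digitSet, Finset.sum_image hinj]

lemma phi_injOn {S₁ S₂ : Finset ℕ} (h1 : ∀ k ∈ S₁, k ≠ 0) (h2 : ∀ k ∈ S₂, k ≠ 0)
    (h : phi S₁ = phi S₂) : S₁ = S₂ := by
  have hd : ∀ x, digitSet S₁ x = digitSet S₂ x := by
    intro x
    have hc := congrArg (Multiset.count x) h
    rw [phi_count, phi_count, sum_eq_digit_sum S₁ h1, sum_eq_digit_sum S₂ h2] at hc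
    have hbits := congrArg (fun m : ℕ => m.bitIndices.toFinset) hc
    simpa only [Finset.toFinset_bitIndices_twoPowSum] using hbits
  have key : ∀ (T₁ T₂ : Finset ℕ), (∀ k ∈ T₁, k ≠ 0) →
      (∀ x, digitSet T₁ x = digitSet T₂ x) → (∀ k ∈ T₂, k ≠ 0) → T₁ ⊆ T₂ := by
    intro T₁ T₂ hT1 hdd hT2 k hk
    have h3 : k.factorization 2 ∈ digitSet T₂ (ordCompl[2] k) := by
      rw [← hdd]; exact digit_of_mem hk
    have := mem_of_digit hT2 h3
    rwa [decomp (hT1 k hk)] at this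
  exact le_antisymm (key S₁ S₂ h1 hd h2)
    (key S₂ S₁ h2 (fun x => (hd x).symm) h1)

/-- The inverse map: each odd part with its binary digits of multiplicity. -/
def psi (M : Multiset ℕ) : Finset ℕ :=
  M.toFinset.biUnion fun x => ((M.count x).bitIndices.toFinset).image fun a => 2 ^ a * x

lemma mem_psi {M : Multiset ℕ} {k : ℕ} :
    k ∈ psi M ↔ ∃ x ∈ M, ∃ a ∈ (M.count x).bitIndices.toFinset, k = 2 ^ a * x := by
  simp only [psi, Finset.mem_biUnion, Finset.mem_image, Multiset.mem_toFinset]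
  constructor
  · rintro ⟨x, hx, a, ha, rfl⟩; exact ⟨x, hx, a, ha, rfl⟩
  · rintro ⟨x, hx, a, ha, rfl⟩; exact ⟨x, hx, a, ha, rfl⟩

lemma phi_psi {M : Multiset ℕ} (hM : ∀ x ∈ M, Odd x) : phi (psi M) = M := by
  ext x₀
  rw [phi_count, psi, Finset.sum_biUnion]
  · have hstep : ∀ x ∈ M.toFinset,
        (∑ k ∈ ((M.count x).bitIndices.toFinset).image fun a => 2 ^ a * x,
          if ordCompl[2] k = x₀ then ordProj[2] k else 0) =
        if x = x₀ then M.count x else 0 := by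
      intro x hx
      have hodd : Odd x := hM x (Multiset.mem_toFinset.1 hx)
      have hx0 : x ≠ 0 := by rintro rfl; simp [Nat.odd_iff] at hodd
      rw [Finset.sum_image]
      · by_cases hxx : x = x₀
        · subst hxx
          simp only [ordCompl_eq hodd, ordProj_eq hodd, if_pos rfl]
          simpa using Finset.twoPowSum_toFinset_bitIndices (M.count x)
        · simp only [ordCompl_eq hodd, if_neg hxx, Finset.sum_const_zero]
      · intro a _ a' _ h
        have := congrArg (fun m : ℕ => m.factorization 2) h
        simpa [fact2 hodd] using this
    rw [Finset.sum_congr rfl hstep, Finset.sum_ite_eq' M.toFinset x₀ fun x => M.count x]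
    by_cases h : x₀ ∈ M.toFinset
    · rw [if_pos h]
    · rw [if_neg h]
      exact (Multiset.count_eq_zero.2 (fun hc => h (Multiset.mem_toFinset.2 hc))).symm
  · -- pairwise disjointness
    intro x hx y hy hxy
    have hx' : Odd x := hM x (by simpa using hx)
    have hy' : Odd y := hM y (by simpa using hy)
    refine Finset.disjoint_left.2 fun k hk hk' => ?_
    simp only [Finset.mem_image] at hk hk'
    obtain ⟨a, -, rfl⟩ := hk
    obtain ⟨a', -, h⟩ := hk'
    apply hxy
    have e1 := ordCompl_eq hx' a
    have e2 := ordCompl_eq hy' a'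
    rw [← e2, h, e1]

lemma psi_elems {M : Multiset ℕ} (hM : ∀ x ∈ M, Odd x) {k : ℕ} (hk : k ∈ psi M) :
    ∃ a x, x ∈ M ∧ k = 2 ^ a * x := by
  obtain ⟨x, hx, a, -, rfl⟩ := mem_psi.1 hk
  exact ⟨a, x, hx, rfl⟩

end Stmt10Aux

theorem stmt10 (q : ℕ) (hq : 2 < q) (hodd : Odd q) (n : ℕ) (hn : 1 ≤ n) :
    fpq 2 q n = bary q n := by
  classical
  open Stmt10Aux in
  have hq0 : q ≠ 0 := by omega
  set A : Set (Finset ℕ) :=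
    {S : Finset ℕ | (∀ k ∈ S, ∃ a b : ℕ, k = 2 ^ a * q ^ b) ∧ S.sum id = n} with hA
  set B : Set (Multiset ℕ) :=
    {S : Multiset ℕ | (∀ k ∈ S, ∃ a : ℕ, k = q ^ a) ∧ S.sum = n} with hB
  have hAnz : ∀ S ∈ A, ∀ k ∈ S, k ≠ 0 := by
    rintro S ⟨hS, -⟩ k hk
    obtain ⟨a, b, rfl⟩ := hS k hk
    positivity
  have himg : Stmt10Aux.phi '' A = B := by
    ext M
    constructor
    · rintro ⟨S, hS, rfl⟩
      have hnz := hAnz S hS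
      obtain ⟨hS1, hS2⟩ := hS
      constructor
      · intro x hx
        obtain ⟨k, hk, rfl⟩ := mem_phi.1 hx
        obtain ⟨a, b, rfl⟩ := hS1 k hk
        exact ⟨b, ordCompl_eq (hodd.pow : Odd (q ^ b)) a⟩
      · rw [phi_sum S hnz, hS2]
    · rintro ⟨hM1, hM2⟩
      have hModd : ∀ x ∈ M, Odd x := by
        intro x hx
        obtain ⟨b, rfl⟩ := hM1 x hx
        exact hodd.pow
      refine ⟨psi M, ⟨?_, ?_⟩, phi_psi hModd⟩
      · intro k hk
        obtain ⟨a, x, hx, rfl⟩ := psi_elems hModd hk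
        obtain ⟨b, rfl⟩ := hM1 x hx
        exact ⟨a, b, rfl⟩
      · have hnz : ∀ k ∈ psi M, k ≠ 0 := by
          intro k hk
          obtain ⟨a, x, hx, rfl⟩ := psi_elems hModd hk
          have : x ≠ 0 := by
            rintro rfl; simpa [Nat.odd_iff] using hModd 0 hx
          positivity
        have := phi_sum (psi M) hnz
        rw [phi_psi hModd] at this
        rw [← this, hM2]
  have hinj : Set.InjOn Stmt10Aux.phi A := fun S₁ hS₁ S₂ hS₂ h =>
    phi_injOn (hAnz S₁ hS₁) (hAnz S₂ hS₂) h
  rw [fpq, bary, ← hA, ← hB, ← himg, Set.ncard_image_of_injOn hinj]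
end

section
/- For any fixed m ≥ 2, the m-ary partition function satisfies b_m(n+1)/b_m(n) → 1 as n → ∞. -/
/-!
Deleting a part `1`, or dividing every part by `m`, gives
`b(n + 1) = b(n) + [m ∣ n + 1] b((n + 1) / m)`. Hence `b(n) = B(n / m)` for the partial sums
`B(t) = ∑_{i ≤ t} b(i)`, and `b(n) ≤ b(n + 1) ≤ b(n) + 2 b(n / m)`, so it suffices that
`B(t) / B(t / m) → ∞`. This is bootstrapped: if eventually `c B(t / m) ≤ B(t)`, then
`(1 - 1/c) B(t) ≤ B(t - 1)`, so `B` decays at most geometrically backwards, and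
`B(m t) = B(t) + m ∑_{j < t} B(j)` is then nearly `(1 + m (c - 1)) B(t)`; this improves `c` to
`c + 1/2` as long as `c ≥ 2`.
-/

open Filter Real

open Finset

def powPartitions (m n : ℕ) : Set (Multiset ℕ) :=
  {S | (∀ k ∈ S, ∃ a : ℕ, k = m ^ a) ∧ S.sum = n}

theorem bary_eq_ncard (m n : ℕ) : bary m n = (powPartitions m n).ncard := rfl

theorem powPartitions_finite {m : ℕ} (hm : 0 < m) (n : ℕ) : (powPartitions m n).Finite := by
  have hpos : ∀ S ∈ powPartitions m n, ∀ k ∈ S, 0 < k := by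
    rintro S ⟨hpow, -⟩ k hk
    obtain ⟨a, rfl⟩ := hpow k hk
    exact pow_pos hm a
  let toPartition : powPartitions m n → n.Partition := fun S =>
    ⟨S.1, fun hk => hpos S.1 S.2 _ hk, S.2.2⟩
  have : Finite (powPartitions m n) :=
    Finite.of_injective toPartition fun S T h => Subtype.ext (congrArg Nat.Partition.parts h)
  exact Set.toFinite _

theorem powPartitions_zero {m : ℕ} (hm : 0 < m) : powPartitions m 0 = {0} := by
  ext S
  refine ⟨fun ⟨hpow, hsum⟩ => Multiset.eq_zero_of_forall_notMem fun k hk => ?_, ?_⟩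
  · obtain ⟨a, rfl⟩ := hpow k hk
    exact (pow_pos hm a).ne' (Multiset.sum_eq_zero_iff.mp hsum _ hk)
  · rintro rfl
    simp [powPartitions]

theorem powPartitions_succ_inter_one_mem (m n : ℕ) :
    powPartitions m (n + 1) ∩ {S | 1 ∈ S} = Multiset.cons 1 '' powPartitions m n := by
  ext S
  constructor
  · rintro ⟨⟨hpow, hsum⟩, hone : 1 ∈ S⟩
    refine ⟨S.erase 1, ⟨fun k hk => hpow k (Multiset.mem_of_mem_erase hk), ?_⟩,
      Multiset.cons_erase hone⟩
    have := Multiset.sum_erase hone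
    omega
  · rintro ⟨T, ⟨hpow, hsum⟩, rfl⟩
    refine ⟨⟨?_, by simp [hsum, add_comm]⟩, Multiset.mem_cons_self 1 T⟩
    simp only [Multiset.mem_cons, forall_eq_or_imp]
    exact ⟨⟨0, (pow_zero m).symm⟩, hpow⟩

theorem dvd_of_mem_powPartitions {m n : ℕ} {S : Multiset ℕ} (hS : S ∈ powPartitions m n)
    (hone : 1 ∉ S) {k : ℕ} (hk : k ∈ S) : m ∣ k := by
  obtain ⟨a, rfl⟩ := hS.1 k hk
  obtain _ | a := a
  · exact absurd hk (by simpa using hone)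
  · exact dvd_pow_self m a.succ_ne_zero

theorem powPartitions_mul_diff_one_mem {m : ℕ} (hm : 1 < m) (q : ℕ) :
    powPartitions m (m * q) \ {S | 1 ∈ S} = Multiset.map (m * ·) '' powPartitions m q := by
  ext S
  constructor
  · rintro ⟨hS, hone : 1 ∉ S⟩
    have hS' : Multiset.map (m * ·) (S.map (· / m)) = S := by
      rw [Multiset.map_map]
      conv_rhs => rw [← Multiset.map_id S]
      exact Multiset.map_congr rfl fun k hk =>
        Nat.mul_div_cancel' (dvd_of_mem_powPartitions hS hone hk)
    refine ⟨S.map (· / m), ⟨?_, ?_⟩, hS'⟩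
    · simp only [Multiset.mem_map]
      rintro _ ⟨k, hk, rfl⟩
      obtain ⟨a, rfl⟩ := hS.1 k hk
      obtain _ | a := a
      · exact absurd hk (by simpa using hone)
      · exact ⟨a, by rw [pow_succ', Nat.mul_div_cancel_left _ (by omega)]⟩
    · have := hS.2
      rw [← hS', Multiset.sum_map_mul_left, Multiset.map_id'] at this
      exact Nat.eq_of_mul_eq_mul_left (by omega) this
  · rintro ⟨T, ⟨hpow, hsum⟩, rfl⟩
    refine ⟨⟨?_, by rw [Multiset.sum_map_mul_left, Multiset.map_id', hsum]⟩, ?_⟩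
    · simp only [Multiset.mem_map]
      rintro _ ⟨k, hk, rfl⟩
      obtain ⟨a, rfl⟩ := hpow k hk
      exact ⟨a + 1, (pow_succ' m a).symm⟩
    · intro hone
      obtain ⟨k, -, hk⟩ := Multiset.mem_map.1 hone
      exact absurd (Nat.eq_one_of_mul_eq_one_right hk) (by omega)

theorem powPartitions_diff_one_mem_eq_empty {m n : ℕ} (h : ¬ m ∣ n) :
    powPartitions m n \ {S | 1 ∈ S} = ∅ := by
  refine Set.eq_empty_of_forall_notMem fun S ⟨hS, hone⟩ => h ?_
  rw [← hS.2]
  exact Multiset.dvd_sum fun k hk => dvd_of_mem_powPartitions hS hone hk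

theorem bary_succ {m : ℕ} (hm : 1 < m) (n : ℕ) :
    bary m (n + 1) = bary m n + if m ∣ n + 1 then bary m ((n + 1) / m) else 0 := by
  have hdiff : (powPartitions m (n + 1) \ {S | 1 ∈ S}).ncard =
      if m ∣ n + 1 then bary m ((n + 1) / m) else 0 := by
    split_ifs with h
    · obtain ⟨q, hq⟩ := h
      rw [hq, powPartitions_mul_diff_one_mem hm, Nat.mul_div_cancel_left q (by omega),
        bary_eq_ncard,
        Set.ncard_image_of_injective _ (Multiset.map_injective (mul_right_injective₀ (by omega)))]
    · rw [powPartitions_diff_one_mem_eq_empty h, Set.ncard_empty]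
  have hone : (powPartitions m (n + 1) ∩ {S | 1 ∈ S}).ncard = bary m n := by
    rw [powPartitions_succ_inter_one_mem, bary_eq_ncard]
    exact Set.ncard_image_of_injective _ fun _ _ => (Multiset.cons_inj_right 1).1
  rw [← hdiff, ← hone, bary_eq_ncard]
  exact (Set.ncard_inter_add_ncard_sdiff_eq_ncard _ _ (powPartitions_finite (by omega) _)).symm

theorem bary_zero {m : ℕ} (hm : 0 < m) : bary m 0 = 1 := by
  rw [bary_eq_ncard, powPartitions_zero hm, Set.ncard_singleton]

theorem Nat.succ_div_le_self {m : ℕ} (hm : 1 < m) (n : ℕ) : (n + 1) / m ≤ n :=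
  Nat.lt_succ_iff.1 (Nat.div_lt_self n.succ_pos hm)

theorem bary_le_bary_succ {m : ℕ} (hm : 1 < m) (n : ℕ) : bary m n ≤ bary m (n + 1) := by
  rw [bary_succ hm]
  exact Nat.le_add_right _ _

theorem bary_monotone {m : ℕ} (hm : 1 < m) : Monotone (bary m) :=
  monotone_nat_of_le_succ (bary_le_bary_succ hm)

theorem bary_pos {m : ℕ} (hm : 1 < m) (n : ℕ) : 0 < bary m n := by
  have := bary_monotone hm n.zero_le
  rwa [bary_zero (by omega)] at this

theorem bary_succ_le_two_mul {m : ℕ} (hm : 1 < m) (n : ℕ) :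
    bary m (n + 1) ≤ 2 * bary m n := by
  have := bary_monotone hm (Nat.succ_div_le_self hm n)
  rw [bary_succ hm]
  split_ifs <;> omega

theorem bary_succ_le {m : ℕ} (hm : 1 < m) (n : ℕ) :
    bary m (n + 1) ≤ bary m n + 2 * bary m (n / m) := by
  rw [bary_succ hm]
  split_ifs with h
  · rw [Nat.succ_div, if_pos h]
    exact Nat.add_le_add_left (bary_succ_le_two_mul hm _) _
  · omega

theorem Finset.sum_range_mul_div {M : Type*} [AddCommMonoid M] (f : ℕ → M) {m : ℕ}
    (hm : 0 < m) (t : ℕ) : ∑ i ∈ range (m * t), f (i / m) = m • ∑ j ∈ range t, f j := by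
  induction t with
  | zero => simp
  | succ t ih =>
    have hblock : ∀ r ∈ range m, f ((m * t + r) / m) = f t := fun r hr => by
      rw [Nat.mul_add_div hm, Nat.div_eq_of_lt (mem_range.1 hr), add_zero]
    rw [mul_add_one, sum_range_add, ih, sum_congr rfl hblock, sum_const, card_range,
      sum_range_succ, smul_add]

noncomputable def barySum (m t : ℕ) : ℕ := ∑ i ∈ range (t + 1), bary m i

theorem barySum_succ (m t : ℕ) : barySum m (t + 1) = barySum m t + bary m (t + 1) :=
  sum_range_succ _ _

theorem barySum_monotone (m : ℕ) : Monotone (barySum m) := fun _ _ h =>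
  sum_le_sum_of_subset (range_mono (by omega))

theorem bary_eq_barySum_div {m : ℕ} (hm : 1 < m) (n : ℕ) : bary m n = barySum m (n / m) := by
  induction n with
  | zero => simp [barySum, bary_zero (by omega : 0 < m)]
  | succ n ih =>
    rw [bary_succ hm, ih, Nat.succ_div]
    split_ifs
    · exact (barySum_succ m _).symm
    · rfl

theorem barySum_succ_eq {m : ℕ} (hm : 1 < m) (t : ℕ) :
    barySum m (t + 1) = barySum m t + barySum m ((t + 1) / m) := by
  rw [barySum_succ, bary_eq_barySum_div hm]

theorem barySum_pos {m : ℕ} (hm : 1 < m) (t : ℕ) : 0 < barySum m t := by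
  simpa [bary_eq_barySum_div hm, Nat.mul_div_cancel_left t (by omega : 0 < m)]
    using bary_pos hm (m * t)

theorem barySum_mul {m : ℕ} (hm : 1 < m) (t : ℕ) :
    barySum m (m * t) = barySum m t + m * ∑ j ∈ range t, barySum m j := by
  have hdiv : ∀ i, bary m i = barySum m (i / m) := bary_eq_barySum_div hm
  rw [barySum, sum_range_succ, sum_congr rfl fun i _ => hdiv i,
    sum_range_mul_div _ (by omega), hdiv, Nat.mul_div_cancel_left t (by omega), smul_eq_mul,
    add_comm]

theorem two_mul_barySum_div_le {m : ℕ} (hm : 1 < m) (t : ℕ) :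
    2 * barySum m ((t + 1) / m) ≤ barySum m (t + 1) := by
  have := barySum_monotone m (Nat.succ_div_le_self hm t)
  rw [barySum_succ_eq hm]
  omega

theorem pow_mul_le_of_forall_mul_le {f : ℕ → ℝ} {x : ℝ} (hx : 0 ≤ x) {N : ℕ}
    (h : ∀ k ≥ N, x * f (k + 1) ≤ f k) {t : ℕ} (ht : N ≤ t) (d : ℕ) :
    x ^ d * f (t + d) ≤ f t := by
  induction d with
  | zero => simp
  | succ d ih =>
    calc x ^ (d + 1) * f (t + (d + 1)) = x ^ d * (x * f (t + d + 1)) := by ring_nf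
      _ ≤ x ^ d * f (t + d) := by gcongr; exact h _ (by omega)
      _ ≤ f t := ih

theorem geom_sum_mul_le_sum_range {f : ℕ → ℝ} (hf : 0 ≤ f) {x : ℝ} (hx : 0 ≤ x)
    {N : ℕ} (h : ∀ k ≥ N, x * f (k + 1) ≤ f k) (K : ℕ) {t : ℕ} (ht : N + K ≤ t) :
    (∑ d ∈ range K, x ^ (d + 1)) * f t ≤ ∑ j ∈ range t, f j :=
  calc (∑ d ∈ range K, x ^ (d + 1)) * f t
      = ∑ d ∈ range K, x ^ (d + 1) * f (t - 1 - d + (d + 1)) := by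
        rw [sum_mul]
        refine sum_congr rfl fun d hd => ?_
        rw [mem_range] at hd
        congr 2
        omega
    _ ≤ ∑ d ∈ range K, f (t - 1 - d) := by
        gcongr with d hd
        rw [mem_range] at hd
        exact pow_mul_le_of_forall_mul_le hx h (by omega) _
    _ ≤ ∑ d ∈ range t, f (t - 1 - d) :=
        sum_le_sum_of_subset_of_nonneg (range_mono (by omega)) fun _ _ _ => hf _
    _ = ∑ j ∈ range t, f j := sum_range_reflect f t

theorem hasSum_one_sub_inv_pow_succ {c : ℝ} (hc : 1 < c) :
    HasSum (fun d => (1 - c⁻¹) ^ (d + 1)) (c - 1) := by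
  have hsum : (1 - c⁻¹) * (1 - (1 - c⁻¹))⁻¹ = c - 1 := by
    rw [sub_sub_cancel, inv_inv, sub_mul, inv_mul_cancel₀ (by linarith), one_mul]
  have hx0 : 0 ≤ 1 - c⁻¹ := sub_nonneg.2 (inv_le_one_of_one_le₀ hc.le)
  have hx1 : 1 - c⁻¹ < 1 := sub_lt_self 1 (inv_pos.2 (by linarith))
  simpa only [pow_succ', hsum] using (hasSum_geometric_of_lt_one hx0 hx1).mul_left (1 - c⁻¹)

theorem one_sub_inv_mul_barySum_succ_le {m : ℕ} (hm : 1 < m) {c : ℝ} (hc : 0 < c) {k : ℕ}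
    (h : c * barySum m ((k + 1) / m) ≤ barySum m (k + 1)) :
    (1 - c⁻¹) * barySum m (k + 1) ≤ barySum m k := by
  have hsucc : (barySum m (k + 1) : ℝ) = barySum m k + barySum m ((k + 1) / m) := by
    rw [barySum_succ_eq hm, Nat.cast_add]
  have hsmall : (barySum m ((k + 1) / m) : ℝ) ≤ c⁻¹ * barySum m (k + 1) :=
    (le_inv_mul_iff₀ hc).2 h
  linarith [sub_mul 1 c⁻¹ (barySum m (k + 1) : ℝ)]

theorem eventually_mul_barySum_div_le_of_lt {m : ℕ} (hm : 1 < m) {c c' : ℝ} (hc : 1 < c)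
    (hc' : c' < 1 + m * (c - 1))
    (h : ∀ᶠ n in atTop, c * barySum m (n / m) ≤ barySum m n) :
    ∀ᶠ n in atTop, c' * barySum m (n / m) ≤ barySum m n := by
  set B : ℕ → ℝ := fun n => barySum m n with hB
  have hm0 : (0 : ℝ) < m := by positivity
  obtain ⟨N, hN⟩ := eventually_atTop.1 h
  have hdecay : ∀ k ≥ N, (1 - c⁻¹) * B (k + 1) ≤ B k := fun k hk =>
    one_sub_inv_mul_barySum_succ_le hm (by linarith) (hN (k + 1) (by omega))
  obtain ⟨K, hK⟩ : ∃ K, (c' - 1) / m < ∑ d ∈ range K, (1 - c⁻¹) ^ (d + 1) := by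
    refine ((hasSum_one_sub_inv_pow_succ hc).tendsto_sum_nat.eventually (lt_mem_nhds ?_)).exists
    rw [div_lt_iff₀ hm0]
    linarith
  rw [div_lt_iff₀ hm0] at hK
  filter_upwards [(Nat.tendsto_div_const_atTop (by omega : m ≠ 0)).eventually_ge_atTop (N + K)]
    with n hn
  calc c' * B (n / m) ≤ (1 + m * ∑ d ∈ range K, (1 - c⁻¹) ^ (d + 1)) * B (n / m) := by
        gcongr
        linarith
    _ = B (n / m) + m * ((∑ d ∈ range K, (1 - c⁻¹) ^ (d + 1)) * B (n / m)) := by ring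
    _ ≤ B (n / m) + m * ∑ j ∈ range (n / m), B j := by
        gcongr
        exact geom_sum_mul_le_sum_range (fun _ => Nat.cast_nonneg _)
          (sub_nonneg.2 (inv_le_one_of_one_le₀ hc.le)) hdecay K hn
    _ = B (m * (n / m)) := by simp only [hB, barySum_mul hm]; push_cast; rfl
    _ ≤ B n := Nat.cast_le.2 (barySum_monotone m (Nat.mul_div_le n m))

theorem eventually_mul_barySum_div_le {m : ℕ} (hm : 1 < m) (c : ℝ) :
    ∀ᶠ n in atTop, c * barySum m (n / m) ≤ barySum m n := by
  have hladder : ∀ k : ℕ,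
      ∀ᶠ n in atTop, (2 + k / 2 : ℝ) * barySum m (n / m) ≤ barySum m n := by
    intro k
    induction k with
    | zero =>
      refine eventually_atTop.2 ⟨1, fun n hn => ?_⟩
      obtain ⟨t, rfl⟩ : ∃ t, n = t + 1 := ⟨n - 1, by omega⟩
      simpa using (Nat.cast_le (α := ℝ)).2 (two_mul_barySum_div_le hm t)
    | succ k ih =>
      have hm2 : (2 : ℝ) ≤ m := by exact_mod_cast hm
      have hk0 : (0 : ℝ) ≤ k := Nat.cast_nonneg k
      refine eventually_mul_barySum_div_le_of_lt hm (by linarith) ?_ ih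
      push_cast
      nlinarith [mul_le_mul_of_nonneg_right hm2 hk0]
  obtain ⟨k, hk⟩ := exists_nat_ge (2 * c)
  filter_upwards [hladder k] with n hn
  exact le_trans (mul_le_mul_of_nonneg_right (by linarith) (Nat.cast_nonneg _)) hn

theorem tendsto_barySum_div_barySum_div_atTop {m : ℕ} (hm : 1 < m) :
    Tendsto (fun n => (barySum m n : ℝ) / barySum m (n / m)) atTop atTop :=
  tendsto_atTop.2 fun c => (eventually_mul_barySum_div_le hm c).mono fun _ hn =>
    (le_div_iff₀ (Nat.cast_pos.2 (barySum_pos hm _))).2 hn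

theorem tendsto_bary_div_bary_div_atTop {m : ℕ} (hm : 1 < m) :
    Tendsto (fun n => (bary m n : ℝ) / bary m (n / m)) atTop atTop := by
  simp only [bary_eq_barySum_div hm]
  exact (tendsto_barySum_div_barySum_div_atTop hm).comp (Nat.tendsto_div_const_atTop (by omega))

theorem stmt15 (m : ℕ) (hm : 2 ≤ m) :
    Filter.Tendsto (fun n : ℕ => (bary m (n + 1) : ℝ) / (bary m n))
      Filter.atTop (nhds 1) := by
  have hpos : ∀ n, (0 : ℝ) < bary m n := fun n => Nat.cast_pos.2 (bary_pos hm n)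
  refine tendsto_of_tendsto_of_tendsto_of_le_of_le tendsto_const_nhds
    (h := fun n => 1 + 2 * ((bary m n : ℝ) / bary m (n / m))⁻¹) ?_ (fun n => ?_) (fun n => ?_)
  · simpa using ((tendsto_bary_div_bary_div_atTop hm).inv_tendsto_atTop.const_mul 2).const_add 1
  · exact (one_le_div (hpos n)).2 (Nat.cast_le.2 (bary_le_bary_succ hm n))
  · have := (Nat.cast_le (α := ℝ)).2 (bary_succ_le hm n)
    push_cast at this
    simp only [inv_div]
    rw [div_le_iff₀ (hpos n), add_mul, mul_assoc, div_mul_cancel₀ _ (hpos n).ne', one_mul]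
    linarith
end

section
/- Let q ≥ 3 be an integer and define g(0)=0, g(1)=1, and g(n+1) = g(n) + g(⌈(n+1)/q⌉) for n ≥ 1. Define h by h(k)=k for 1 ≤ k ≤ q, h(n+1)=h(n)+1 if q ∤ n, and h(n+1)=h(n)(1 − 1/h(n/q + 1)) + 1 if q | n. Then h(n) ≥ ⌊log n / log q⌋ for all n ≥ 1. -/
/-!
The stronger bound `Nat.log q n + 1 ≤ h n` holds by strong induction, and it suffices because
`⌊log n / log q⌋ = Nat.log q n`. At an index `n + 1` with `q ∤ n`, `h` grows by one while
`Nat.log q` grows by at most one. At `n + 1 = q (k + 1) + 1` set `L = Nat.log q (k + 1) + 1`,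
which bounds `Nat.log q (n + 1)`. The `q - 1` unit steps from `q k + 1` to `q (k + 1)` give
`A := h (q (k + 1)) ≥ L + q - 1`, and induction gives `B := h (k + 2) ≥ max L 2`. Then
`A (1 - 1/B) ≥ L` reduces to `(q - 1)(B - 1) ≥ L`, which is where `q ≥ 3` enters.
-/

open Real

theorem Nat.log_le_log_div_base_add_one (b n : ℕ) : Nat.log b n ≤ Nat.log b (n / b) + 1 := by
  rw [Nat.log_div_base]
  omega

theorem Nat.log_succ_le_log_add_one (b n : ℕ) : Nat.log b (n + 1) ≤ Nat.log b n + 1 := by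
  rcases le_or_gt b 1 with hb | hb
  · simp [Nat.log_of_left_le_one hb]
  rcases n.eq_zero_or_pos with rfl | hn
  · simp
  refine (Nat.log_le_log_div_base_add_one b (n + 1)).trans ?_
  gcongr
  exact Nat.div_le_of_le_mul (by nlinarith)

theorem floor_log_div_log_natCast (b n : ℕ) :
    (⌊Real.log n / Real.log b⌋ : ℝ) = Nat.log b n := by
  rw [log_div_log, floor_logb_natCast n.cast_nonneg, Int.log_natCast, Int.cast_natCast]

theorem le_mul_one_sub_one_div {L A B c : ℝ} (hc : 2 ≤ c) (hA : L + c ≤ A) (hB : 2 ≤ B)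
    (hLB : L ≤ B) : L ≤ A * (1 - 1 / B) := by
  have hB0 : 0 < B := by linarith
  have hfac : 0 ≤ 1 - 1 / B := by
    rw [sub_nonneg, div_le_one hB0]
    linarith
  calc L ≤ (L + c) * (1 - 1 / B) := by
        rw [mul_sub, mul_one_div, le_sub_iff_add_le, ← le_sub_iff_add_le', div_le_iff₀ hB0]
        nlinarith
    _ ≤ A * (1 - 1 / B) := mul_le_mul_of_nonneg_right hA hfac

section Recursion

variable {q : ℕ} {h : ℕ → ℝ}

theorem apply_succ_of_not_dvd (hh1 : ∀ k : ℕ, 1 ≤ k → k ≤ q → h k = k)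
    (hh2 : ∀ n : ℕ, q ≤ n → ¬ q ∣ n → h (n + 1) = h n + 1) {n : ℕ} (hn : 1 ≤ n)
    (hnq : ¬ q ∣ n) : h (n + 1) = h n + 1 := by
  rcases lt_or_ge n q with hlt | hle
  · rw [hh1 (n + 1) (by omega) hlt, hh1 n hn hlt.le]
    push_cast
    ring
  · exact hh2 n hle hnq

theorem apply_mul_succ (hq : 2 ≤ q) (hh1 : ∀ k : ℕ, 1 ≤ k → k ≤ q → h k = k)
    (hh2 : ∀ n : ℕ, q ≤ n → ¬ q ∣ n → h (n + 1) = h n + 1) (k : ℕ) :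
    h (q * (k + 1)) = h (q * k + 1) + (q - 1) := by
  have chain : ∀ m, m + 1 ≤ q → h (q * k + 1 + m) = h (q * k + 1) + m := by
    intro m
    induction m with
    | zero => simp
    | succ m ih =>
      intro hm
      have hnd : ¬ q ∣ q * k + 1 + m := by
        rw [add_assoc, Nat.dvd_add_right (dvd_mul_right q k)]
        exact Nat.not_dvd_of_pos_of_lt (by omega) (by omega)
      rw [← add_assoc, apply_succ_of_not_dvd hh1 hh2 (by omega) hnd, ih (by omega)]
      push_cast
      ring
  have hend : q * (k + 1) = q * k + 1 + (q - 1) := by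
    rw [mul_add]
    omega
  rw [hend, chain (q - 1) (by omega), Nat.cast_sub (by omega)]
  push_cast
  ring

theorem natLog_add_one_le_apply_mul_succ_add_one (hq : 3 ≤ q)
    (hh1 : ∀ k : ℕ, 1 ≤ k → k ≤ q → h k = k)
    (hh2 : ∀ n : ℕ, q ≤ n → ¬ q ∣ n → h (n + 1) = h n + 1)
    (hh3 : ∀ n : ℕ, q ≤ n → q ∣ n → h (n + 1) = h n * (1 - 1 / h (n / q + 1)) + 1) (k : ℕ)
    (ih : ∀ m < q * (k + 1) + 1, 1 ≤ m → (Nat.log q m : ℝ) + 1 ≤ h m) :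
    (Nat.log q (q * (k + 1) + 1) : ℝ) + 1 ≤ h (q * (k + 1) + 1) := by
  set L : ℝ := Nat.log q (k + 1) + 1
  have hlog : (Nat.log q (q * (k + 1) + 1) : ℝ) ≤ L := by
    have := Nat.log_le_log_div_base_add_one q (q * (k + 1) + 1)
    rw [Nat.mul_add_div (by omega), Nat.div_eq_of_lt (by omega), add_zero] at this
    simp only [L]
    exact_mod_cast this
  have hA : L + (q - 1) ≤ h (q * (k + 1)) := by
    have hmono : (Nat.log q (k + 1) : ℝ) ≤ Nat.log q (q * k + 1) := by
      exact_mod_cast Nat.log_mono_right (by nlinarith)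
    have := ih (q * k + 1) (by nlinarith) (by omega)
    rw [apply_mul_succ (by omega) hh1 hh2]
    linarith
  have hB : L ≤ h (k + 2) := by
    have hmono : (Nat.log q (k + 1) : ℝ) ≤ Nat.log q (k + 2) := by
      exact_mod_cast Nat.log_mono_right (by omega)
    have := ih (k + 2) (by nlinarith) (by omega)
    linarith
  have hB2 : 2 ≤ h (k + 2) := by
    rcases le_or_gt (k + 2) q with hkq | hkq
    · rw [hh1 (k + 2) (by omega) hkq]
      push_cast
      linarith
    · have hpos : (1 : ℝ) ≤ Nat.log q (k + 2) := by
        exact_mod_cast Nat.log_pos (by omega) hkq.le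
      have := ih (k + 2) (by nlinarith) (by omega)
      linarith
  have hq' : (2 : ℝ) ≤ q - 1 := by
    have : (3 : ℝ) ≤ q := by exact_mod_cast hq
    linarith
  have hstep := hh3 (q * (k + 1)) (by nlinarith) (dvd_mul_right q _)
  rw [Nat.mul_div_cancel_left _ (by omega)] at hstep
  rw [hstep]
  linarith [le_mul_one_sub_one_div hq' hA hB2 hB]

theorem natLog_add_one_le_apply (hq : 3 ≤ q) (hh1 : ∀ k : ℕ, 1 ≤ k → k ≤ q → h k = k)
    (hh2 : ∀ n : ℕ, q ≤ n → ¬ q ∣ n → h (n + 1) = h n + 1)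
    (hh3 : ∀ n : ℕ, q ≤ n → q ∣ n → h (n + 1) = h n * (1 - 1 / h (n / q + 1)) + 1)
    (n : ℕ) (hn : 1 ≤ n) : (Nat.log q n : ℝ) + 1 ≤ h n := by
  induction n using Nat.strong_induction_on with
  | _ n ih =>
  obtain rfl | ⟨p, rfl, hp⟩ : n = 1 ∨ ∃ p, n = p + 1 ∧ 1 ≤ p := by
    rcases n with _ | _ | p <;> simp_all
  · simp [hh1 1 le_rfl (by omega)]
  by_cases hdvd : q ∣ p
  · obtain ⟨k, rfl⟩ : ∃ k, p = q * (k + 1) := by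
      obtain ⟨j, rfl⟩ := hdvd
      exact ⟨j - 1, by rcases j with _ | j <;> simp_all⟩
    exact natLog_add_one_le_apply_mul_succ_add_one hq hh1 hh2 hh3 k ih
  · have hlog : (Nat.log q (p + 1) : ℝ) ≤ Nat.log q p + 1 := by
      exact_mod_cast Nat.log_succ_le_log_add_one q p
    have := ih p (by omega) hp
    rw [apply_succ_of_not_dvd hh1 hh2 hp hdvd]
    linarith

end Recursion

theorem stmt16 (q : ℕ) (hq : 3 ≤ q) (h : ℕ → ℝ)
    (hh1 : ∀ k : ℕ, 1 ≤ k → k ≤ q → h k = k)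
    (hh2 : ∀ n : ℕ, q ≤ n → ¬ q ∣ n → h (n + 1) = h n + 1)
    (hh3 : ∀ n : ℕ, q ≤ n → q ∣ n → h (n + 1) = h n * (1 - 1 / h (n / q + 1)) + 1) :
    ∀ n : ℕ, 1 ≤ n → (⌊Real.log n / Real.log q⌋ : ℝ) ≤ h n := by
  intro n hn
  rw [floor_log_div_log_natCast]
  linarith [natLog_add_one_le_apply hq hh1 hh2 hh3 n hn]
end

section
/- Let q ≥ 3 be an integer, g defined by g(0)=0, g(1)=1, g(n+1)=g(n)+g(⌈(n+1)/q⌉), and h defined by h(k)=k for 1 ≤ k ≤ q, h(n+1)=h(n)+1 if q ∤ n, h(n+1)=h(n)(1 − 1/h(n/q+1)) + 1 if q | n. Then g(n) ≥ h(n)·g(⌈n/q⌉) for all n ≥ 1. -/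
open Filter Real

theorem stmt17 (q : ℕ) (hq : 3 ≤ q) (g : ℕ → ℕ) (h : ℕ → ℝ)
    (hg0 : g 0 = 0) (hg1 : g 1 = 1)
    (hg : ∀ n : ℕ, 1 ≤ n → g (n + 1) = g n + g ((n + q) / q))
    (hh1 : ∀ k : ℕ, 1 ≤ k → k ≤ q → h k = k)
    (hh2 : ∀ n : ℕ, q ≤ n → ¬ q ∣ n → h (n + 1) = h n + 1)
    (hh3 : ∀ n : ℕ, q ≤ n → q ∣ n → h (n + 1) = h n * (1 - 1 / h (n / q + 1)) + 1) :
    ∀ n : ℕ, 1 ≤ n → h n * (g ((n + q - 1) / q) : ℝ) ≤ (g n : ℝ) := by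
  have hq0 : 0 < q := by omega
  -- g n ≥ n
  have hgl : ∀ n : ℕ, n ≤ g n := by
    intro n
    induction n using Nat.strong_induction_on with
    | _ n ih =>
      match n, ih with
      | 0, _ => simp [hg0]
      | 1, _ => simp [hg1]
      | (m+2), ih =>
        rw [show m + 2 = (m+1) + 1 from rfl, hg (m+1) (by omega)]
        obtain ⟨d, hd, hdlt⟩ : ∃ d, (m+1+q)/q = d+1 ∧ d < m+1 :=
          ⟨(m+1)/q, Nat.add_div_right _ hq0, Nat.div_lt_self (by omega) (by omega)⟩
        rw [hd]
        have h1 := ih (d+1) (by omega)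
        have h2 := ih (m+1) (by omega)
        omega
  -- h n ≥ 1 for n ≥ 1
  have hhl : ∀ n : ℕ, 1 ≤ n → (1:ℝ) ≤ h n := by
    intro n
    induction n using Nat.strong_induction_on with
    | _ n ih =>
      intro hn
      by_cases hc : n ≤ q
      · rw [hh1 n hn hc]; exact_mod_cast hn
      · obtain ⟨m, rfl⟩ : ∃ m, n = m + 1 := ⟨n-1, by omega⟩
        have hm : q ≤ m := by omega
        by_cases hd : q ∣ m
        · rw [hh3 m hm hd]
          obtain ⟨b, hb, hblt⟩ : ∃ b, m/q = b ∧ b < m :=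
            ⟨m/q, rfl, Nat.div_lt_self (by omega) (by omega)⟩
          rw [hb]
          clear hb
          have h1 : (1:ℝ) ≤ h (b + 1) := ih (b+1) (by omega) (by omega)
          have h2 : (1:ℝ) ≤ h m := ih m (by omega) (by omega)
          have h3 : (0:ℝ) ≤ 1 - 1 / h (b+1) := by
            have : 1 / h (b+1) ≤ 1 := by
              rw [div_le_one (by linarith)]; linarith
            linarith
          nlinarith
        · rw [hh2 m hm hd]
          have := ih m (by omega) (by omega)
          linarith
  intro n
  induction n using Nat.strong_induction_on with
  | _ n ih =>
    intro hn
    by_cases hc : n ≤ q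
    · have hdiv : (n+q-1)/q = 1 :=
        Nat.div_eq_of_lt_le (by omega) (by omega)
      rw [hh1 n hn hc, hdiv, hg1]
      have h1 : (n:ℝ) ≤ (g n : ℝ) := by exact_mod_cast hgl n
      push_cast
      linarith
    · obtain ⟨m, rfl⟩ : ∃ m, n = m + 1 := ⟨n-1, by omega⟩
      have hm : q ≤ m := by omega
      obtain ⟨k, hk⟩ : ∃ k, m = k + 1 := ⟨m-1, by omega⟩
      have hgeq : g (m+1) = g m + g ((m+q)/q) := hg m (by omega)
      have hc3 : (m+q)/q = m/q + 1 := Nat.add_div_right _ hq0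
      have hc1 : (m+1+q-1)/q = m/q + 1 := by
        rw [show m+1+q-1 = m+q from by omega, hc3]
      by_cases hd : q ∣ m
      · -- divisible case
        have hmq : m/q = k/q + 1 := by
          rw [hk]; exact Nat.succ_div_of_dvd (by rwa [← hk])
        have hc2 : (m+q-1)/q = m/q := by
          rw [show m+q-1 = k+q from by omega, Nat.add_div_right _ hq0]
          exact hmq.symm
        have halt : m/q < m := Nat.div_lt_self (by omega) (by omega)
        have ha1 : 1 ≤ m/q := (Nat.one_le_div_iff hq0).mpr hm
        obtain ⟨a, ha⟩ : ∃ a, m/q = a := ⟨_, rfl⟩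
        rw [ha] at hc1 hc2 hc3 halt ha1
        rw [hh3 m hm hd, ha, hc1, hgeq, hc3]
        have hih := ih m (by omega) (by omega)
        rw [hc2] at hih
        have hiha := ih (a+1) (by omega) (by omega)
        rw [show a+1+q-1 = a+q from by omega] at hiha
        have hgeqa : g (a+1) = g a + g ((a+q)/q) := hg a ha1
        have hH1 : (1:ℝ) ≤ h (a+1) := hhl (a+1) (by omega)
        have hHpos : (0:ℝ) < h (a+1) := by linarith
        have hmpos : (1:ℝ) ≤ h m := hhl m (by omega)
        have hsum : (g (a+1) : ℝ) = (g a : ℝ) + (g ((a+q)/q) : ℝ) := by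
          rw [hgeqa]; push_cast; ring
        have hDle : (g ((a+q)/q) : ℝ) ≤ (g (a+1) : ℝ) / h (a+1) :=
          (le_div_iff₀ hHpos).mpr (by linarith [hiha])
        have key : (1 - 1/h (a+1)) * (g (a+1) : ℝ) ≤ (g a : ℝ) := by
          have h1 : (g (a+1) : ℝ) - (g (a+1) : ℝ) / h (a+1) ≤ (g a : ℝ) := by
            linarith
          calc (1 - 1/h (a+1)) * (g (a+1) : ℝ)
              = (g (a+1) : ℝ) - (g (a+1) : ℝ) / h (a+1) := by ring
            _ ≤ (g a : ℝ) := h1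
        have hmul : h m * ((1 - 1/h (a+1)) * (g (a+1) : ℝ)) ≤ h m * (g a : ℝ) :=
          mul_le_mul_of_nonneg_left key (by linarith)
        push_cast
        nlinarith [hih, hmul]
      · -- non-divisible case
        have hmq : m/q = k/q := by
          rw [hk]; exact Nat.succ_div_of_not_dvd (by rwa [← hk])
        have hc2 : (m+q-1)/q = m/q + 1 := by
          rw [show m+q-1 = k+q from by omega, Nat.add_div_right _ hq0, hmq]
        rw [hh2 m hm hd, hc1, hgeq, hc3]
        have hih := ih m (by omega) (by omega)
        rw [hc2] at hih
        have hgpos : (0:ℝ) ≤ (g (m/q + 1) : ℝ) := Nat.cast_nonneg _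
        push_cast
        linarith
end

section
/- Let q ≥ 3 and g defined by g(0)=0, g(1)=1, g(n+1)=g(n)+g(⌈(n+1)/q⌉). Then g(k)/g(k+1) → 1 as k → ∞. -/
open Filter Real

lemma aux_mono (q : ℕ) (g : ℕ → ℕ) (hg0 : g 0 = 0)
    (hg : ∀ n : ℕ, 1 ≤ n → g (n + 1) = g n + g ((n + q) / q)) : Monotone g := by
  apply monotone_nat_of_le_succ
  intro n
  rcases Nat.eq_zero_or_pos n with h | h
  · subst h; simp [hg0]
  · rw [hg n h]; exact Nat.le_add_right _ _

lemma aux_pos (q : ℕ) (g : ℕ → ℕ) (hg0 : g 0 = 0) (hg1 : g 1 = 1)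
    (hg : ∀ n : ℕ, 1 ≤ n → g (n + 1) = g n + g ((n + q) / q)) :
    ∀ n, 1 ≤ n → 1 ≤ g n := by
  intro n hn
  calc 1 = g 1 := hg1.symm
  _ ≤ g n := aux_mono q g hg0 hg hn

-- ceil index is ≤ n for n ≥ 1
lemma aux_idx (q : ℕ) (hq : 3 ≤ q) (n : ℕ) (hn : 1 ≤ n) : (n + q) / q ≤ n := by
  have h1 : (n + q) / q = n / q + 1 := Nat.add_div_right n (by omega)
  have h2 : n / q ≤ n / 3 := Nat.div_le_div_left hq (by norm_num)
  have h3 : n / 3 < n ∨ n = 1 := by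
    rcases Nat.eq_or_lt_of_le hn with h | h
    · right; omega
    · left; exact Nat.div_lt_self (by omega) (by norm_num)
  rcases h3 with h3 | h3 <;> simp_all <;> omega

-- block identity
lemma aux_block (q : ℕ) (hq : 3 ≤ q) (g : ℕ → ℕ)
    (hg : ∀ n : ℕ, 1 ≤ n → g (n + 1) = g n + g ((n + q) / q)) :
    ∀ i, 1 ≤ i → ∀ t, t ≤ q → g (i * q + t) = g (i * q) + t * g (i + 1) := by
  intro i hi t
  induction t with
  | zero => simp
  | succ t ih =>
    intro ht
    have ht' : t ≤ q := by omega
    have h1 : 1 ≤ i * q + t := by nlinarith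
    have h2 : (i * q + t + q) / q = i + 1 := by
      rw [show i * q + t + q = t + (i + 1) * q by ring,
        Nat.add_mul_div_right _ _ (by omega : 0 < q), Nat.div_eq_of_lt (by omega : t < q)]
      omega
    rw [show i * q + (t+1) = (i*q + t) + 1 by ring, hg _ h1, h2, ih ht']
    ring


lemma aux_step (q : ℕ) (hq : 3 ≤ q) (g : ℕ → ℕ)
    (hg0 : g 0 = 0) (hg1 : g 1 = 1)
    (hg : ∀ n : ℕ, 1 ≤ n → g (n + 1) = g n + g ((n + q) / q))
    (hmono : Monotone g)
    (hblock : ∀ i, 1 ≤ i → ∀ t, t ≤ q → g (i * q + t) = g (i * q) + t * g (i + 1))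
    (ε : ℝ) (hε0 : 0 < ε) (hε1 : ε ≤ 1/2) (N : ℕ) (hN : 1 ≤ N)
    (H : ∀ n, N ≤ n → (g ((n + q) / q) : ℝ) ≤ ε * g (n + 1)) :
    ∃ N', 1 ≤ N' ∧ ∀ n, N' ≤ n → (g ((n + q) / q) : ℝ) ≤ (3/4 * ε) * g (n + 1) := by
  have hq' : 0 < q := by omega
  have hεne : ε ≠ 0 := ne_of_gt hε0
  -- ratio bound
  have hrat : ∀ j, N ≤ j → (1 - ε) * g (j + 1) ≤ (g j : ℝ) := by
    intro j hj
    have h1 : (g (j+1) : ℝ) = g j + g ((j + q) / q) := by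
      rw [hg j (by omega)]; push_cast; ring
    have h2 := H j hj
    nlinarith
  obtain ⟨T, hT⟩ : ∃ T : ℕ, (1 - ε) ^ T < 1/9 := by
    apply exists_pow_lt_of_lt_one (by norm_num)
    linarith
  set A : ℕ → ℝ := fun T => (1 - ε) * (1 - (1 - ε) ^ T) / ε with hA
  have hApos : ∀ T, 0 ≤ A T := by
    intro T
    have h1 : (1 - ε) ^ T ≤ 1 := pow_le_one₀ (by linarith) (by linarith)
    have h2 : (0:ℝ) ≤ 1 - ε := by linarith
    apply div_nonneg (by nlinarith) (by linarith)
  have hArec : ∀ T, A (T + 1) = (1 - ε) * (A T + 1) := by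
    intro T
    simp only [hA]
    rw [mul_add, mul_one, div_eq_iff hεne, add_mul, mul_assoc ((1:ℝ)-ε),
      div_mul_cancel₀ _ hεne]
    ring
  -- key claim
  have claim : ∀ T : ℕ, ∀ M, N + T ≤ M → (q : ℝ) * A T * g (M + 1) ≤ (g (M * q) : ℝ) := by
    intro T
    induction T with
    | zero =>
      intro M hM
      have : A 0 = 0 := by simp [hA]
      rw [this]
      simp
    | succ T ih =>
      intro M hM
      obtain ⟨M', rfl⟩ : ∃ M', M = M' + 1 := ⟨M - 1, by omega⟩
      have hM1 : 1 ≤ M' := by omega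
      have hb := hblock M' hM1 q le_rfl
      have hb' : (g ((M'+1) * q) : ℝ) = g (M' * q) + q * g (M'+1) := by
        rw [show (M'+1) * q = M'*q + q by ring, hb]
        push_cast; ring
      have hih := ih M' (by omega)
      have hr := hrat (M'+1) (by omega)
      have hAT := hApos T
      have hgM : (0:ℝ) ≤ g (M'+1) := by positivity
      have hgM1 : (0:ℝ) ≤ g (M'+1+1) := by positivity
      have hq3 : (3:ℝ) ≤ q := by exact_mod_cast hq
      have hcoef : (0:ℝ) ≤ (q:ℝ) * (A T + 1) := by
        apply mul_nonneg (by linarith) (by linarith)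
      have key := mul_le_mul_of_nonneg_left hr hcoef
      rw [hArec T]
      nlinarith [key]
  -- conclude
  refine ⟨(N + T + 1) * q, by nlinarith, ?_⟩
  intro n hn
  set M := n / q with hM
  have hMge : N + T + 1 ≤ M := (Nat.le_div_iff_mul_le hq').mpr hn
  have hidx : (n + q) / q = M + 1 := Nat.add_div_right n hq'
  have hclaim := claim T M (by omega)
  have hmul : M * q ≤ n + 1 := le_trans (Nat.div_mul_le_self n q) (by omega)
  have hmn : (g (M * q) : ℝ) ≤ g (n + 1) := by exact_mod_cast hmono hmul
  have hq3 : (3:ℝ) ≤ q := by exact_mod_cast hq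
  have hεA : (4/9 : ℝ) ≤ ε * A T := by
    have h1 : (1/2 : ℝ) ≤ 1 - ε := by linarith
    have h2 : (8/9 : ℝ) ≤ 1 - (1 - ε) ^ T := by linarith
    have h3 : (4/9 : ℝ) ≤ (1 - ε) * (1 - (1 - ε) ^ T) := by nlinarith
    have h4 : ε * A T = (1 - ε) * (1 - (1 - ε) ^ T) := by
      simp only [hA]; rw [mul_comm, div_mul_cancel₀ _ hεne]
    linarith
  have hAbound : (4:ℝ) ≤ 3 * ε * ((q:ℝ) * A T) := by
    nlinarith [hApos T]
  rw [hidx]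
  have hgM1 : (0:ℝ) ≤ g (M + 1) := by positivity
  have h6 : 4 * (g (M+1) : ℝ) ≤ 3 * ε * g (n + 1) := by
    have s1 : 4 * (g (M+1) : ℝ) ≤ 3 * ε * ((q:ℝ) * A T) * g (M+1) :=
      mul_le_mul_of_nonneg_right hAbound hgM1
    have s2 : (q:ℝ) * A T * g (M+1) ≤ g (n+1) := le_trans hclaim hmn
    nlinarith [s1, s2, hε0]
  linarith


theorem stmt18 (q : ℕ) (hq : 3 ≤ q) (g : ℕ → ℕ)
    (hg0 : g 0 = 0) (hg1 : g 1 = 1)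
    (hg : ∀ n : ℕ, 1 ≤ n → g (n + 1) = g n + g ((n + q) / q)) :
    Filter.Tendsto (fun k : ℕ => (g k : ℝ) / (g (k + 1)))
      Filter.atTop (nhds 1) := by
  have hq' : 0 < q := by omega
  have hmono : Monotone g := aux_mono q g hg0 hg
  have hpos := aux_pos q g hg0 hg1 hg
  have hblock := aux_block q hq g hg
  -- iterated bound
  have Qs : ∀ j : ℕ, ∃ N, 1 ≤ N ∧ ∀ n, N ≤ n →
      (g ((n + q) / q) : ℝ) ≤ (1/2) * (3/4)^j * g (n + 1) := by
    intro j
    induction j with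
    | zero =>
      refine ⟨1, le_rfl, ?_⟩
      intro n hn
      have h1 : (n + q) / q ≤ n := aux_idx q hq n hn
      have h2 : g ((n + q) / q) ≤ g n := hmono h1
      have h3 : g (n + 1) = g n + g ((n + q) / q) := hg n hn
      have h2' : (g ((n + q) / q) : ℝ) ≤ g n := by exact_mod_cast h2
      have h3' : (g (n+1) : ℝ) = g n + g ((n + q) / q) := by rw [h3]; push_cast; ring
      simp only [pow_zero, mul_one]
      linarith
    | succ j ih =>
      obtain ⟨N, hN1, hN⟩ := ih
      have hε0 : (0:ℝ) < (1/2) * (3/4)^j := by positivity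
      have hε1 : (1/2 : ℝ) * (3/4)^j ≤ 1/2 := by
        nlinarith [pow_le_one₀ (by norm_num : (0:ℝ) ≤ 3/4) (by norm_num : (3/4:ℝ) ≤ 1) (n := j)]
      obtain ⟨N', hN'1, hN'⟩ := aux_step q hq g hg0 hg1 hg hmono hblock _ hε0 hε1 N hN1 hN
      refine ⟨N', hN'1, ?_⟩
      intro n hn
      have := hN' n hn
      calc (g ((n + q) / q) : ℝ) ≤ (3/4 * ((1/2) * (3/4)^j)) * g (n+1) := this
      _ = (1/2) * (3/4)^(j+1) * g (n+1) := by ring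
  -- the subtracted term tends to 0
  have hzero : Tendsto (fun k : ℕ => (g ((k + q) / q) : ℝ) / g (k + 1)) atTop (nhds 0) := by
    rw [Metric.tendsto_atTop]
    intro ε hε
    obtain ⟨j, hj⟩ : ∃ j : ℕ, ((3:ℝ)/4) ^ j < ε := exists_pow_lt_of_lt_one hε (by norm_num)
    obtain ⟨N, hN1, hN⟩ := Qs j
    refine ⟨N, ?_⟩
    intro n hn
    have hg1' : (1:ℝ) ≤ g (n + 1) := by exact_mod_cast hpos (n+1) (by omega)
    have hnum : (0:ℝ) ≤ g ((n + q) / q) := by positivity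
    have hb := hN n hn
    have hpow : (0:ℝ) < (3/4)^j := by positivity
    rw [Real.dist_eq, sub_zero, abs_of_nonneg (by positivity)]
    rw [div_lt_iff₀ (by linarith)]
    calc (g ((n + q) / q) : ℝ) ≤ (1/2) * (3/4)^j * g (n + 1) := hb
    _ < ε * g (n+1) := by nlinarith
  -- conclude
  have key : Tendsto (fun k : ℕ => 1 - (g ((k + q) / q) : ℝ) / g (k + 1)) atTop (nhds 1) := by
    have := (tendsto_const_nhds (x := (1:ℝ)) (f := atTop (α := ℕ))).sub hzero
    simpa using this
  apply key.congr'
  filter_upwards [eventually_ge_atTop 1] with k hk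
  have hg1' : (1:ℝ) ≤ g (k + 1) := by exact_mod_cast hpos (k+1) (by omega)
  have h3' : (g (k+1) : ℝ) = g k + g ((k + q) / q) := by rw [hg k hk]; push_cast; ring
  have hne : (g (k+1) : ℝ) ≠ 0 := by linarith
  rw [eq_div_iff hne, sub_mul, one_mul, div_mul_cancel₀ _ hne]
  linarith
end
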